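/- arXiv:2202.00605 — 7 statements merged into one kernel-verified Lean document; each statement's English description precedes it below -/
import Mathlib

section
/- For every incentive compatible menu (γ^k)_{k∈K}, there exists an incentive compatible menu (γ̄^k)_{k∈K} in which every distribution γ̄^k is supported on the finite set Ξ*, and whose sender expected utility is at least the sender expected utility of (γ^k). (Hence there always exists a sender-optimal menu of signaling schemes encoded as probability distributions over Ξ*.) -/
/-!
Every posterior `ξ` of the menu lies in the polytope `Ξ^𝐚` of the action profile `𝐚 = (b k ξ)_k`
it induces. `Ξ^𝐚` is a bounded polyhedron, so it has finitely many extreme points and, by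
Krein–Milman, is their convex hull: `ξ` splits into extreme points of `Ξ^𝐚`. At every such point
`a_k` is still a best response of type `k`, so every type's utility (from any report) is the same
linear function of the posterior as at `ξ`, while the sender-favourable tie-breaking can only
raise the sender's utility. Replacing each posterior by such a splitting keeps the menu Bayes
plausible and incentive compatible.
-/

open Finsupp

section Splitting

variable {E : Type*} [AddCommGroup E] [Module ℝ E]

structure IsSplitting (δ : E →₀ ℝ) (T : Set E) (x : E) : Prop where
  nonneg : ∀ y, 0 ≤ δ y
  support_subset : ↑δ.support ⊆ T
  sum_eq_one : ∑ y ∈ δ.support, δ y = 1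
  sum_smul_eq : ∑ y ∈ δ.support, δ y • y = x

variable {δ : E →₀ ℝ} {T T' : Set E} {x : E}

lemma IsSplitting.mono (h : IsSplitting δ T x) (hT : T ⊆ T') : IsSplitting δ T' x :=
  ⟨h.nonneg, h.support_subset.trans hT, h.sum_eq_one, h.sum_smul_eq⟩

lemma IsSplitting.sum_mul_map (h : IsSplitting δ T x) (L : E →ₗ[ℝ] ℝ) :
    ∑ y ∈ δ.support, δ y * L y = L x := by
  simp [← h.sum_smul_eq, map_sum]

lemma exists_isSplitting_of_mem_convexHull (hx : x ∈ convexHull ℝ T) :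
    ∃ δ, IsSplitting δ T x := by
  classical
  rw [convexHull_eq_union_convexHull_finite_subsets, Set.mem_iUnion₂] at hx
  obtain ⟨t, htT, hxt⟩ := hx
  obtain ⟨w, hw₀, hw₁, hwx⟩ := Finset.mem_convexHull'.mp hxt
  set δ := Finsupp.indicator t fun y _ => w y
  have hδ : ∀ y ∈ t, δ y = w y := fun y hy => indicator_of_mem hy _
  have hsub : δ.support ⊆ t := support_indicator_subset _ _
  refine ⟨δ, fun y => ?_, (Finset.coe_subset.2 hsub).trans htT, ?_, ?_⟩
  · by_cases hy : y ∈ t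
    · exact (hδ y hy).symm ▸ hw₀ y hy
    · rw [indicator_of_notMem hy]
  · rw [Finset.sum_subset hsub fun y _ hy => notMem_support_iff.1 hy, ← hw₁]
    exact Finset.sum_congr rfl hδ
  · rw [Finset.sum_subset hsub fun y _ hy => by rw [notMem_support_iff.1 hy, zero_smul], ← hwx]
    exact Finset.sum_congr rfl fun y hy => by rw [hδ y hy]

lemma sum_support_linearCombination_smul {R α β M : Type*} [CommSemiring R] [AddCommMonoid M]
    [Module R M] (F : β →₀ R) (δ : β → α →₀ R) (f : α → M) :
    ∑ y ∈ (linearCombination R δ F).support, linearCombination R δ F y • f y =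
      ∑ x ∈ F.support, F x • ∑ y ∈ (δ x).support, δ x y • f y := by
  simpa only [linearCombination_apply, Finsupp.sum] using
    linearCombination_linearCombination (R := R) f δ F

lemma sum_support_linearCombination_mul {R α β : Type*} [CommSemiring R] (F : β →₀ R)
    (δ : β → α →₀ R) (f : α → R) :
    ∑ y ∈ (linearCombination R δ F).support, linearCombination R δ F y * f y =
      ∑ x ∈ F.support, F x * ∑ y ∈ (δ x).support, δ x y * f y :=
  sum_support_linearCombination_smul F δ f

lemma sum_smul_eq_iff_forall_sum_mul_apply {ι : Type*} {δ : (ι → ℝ) →₀ ℝ} {x : ι → ℝ} :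
    ∑ y ∈ δ.support, δ y • y = x ↔ ∀ i, ∑ y ∈ δ.support, δ y * y i = x i := by
  simp [funext_iff, Finset.sum_apply]

lemma IsSplitting.linearCombination {F : E →₀ ℝ} {δ : E → E →₀ ℝ} {S : Set E}
    (hF : IsSplitting F S x) (hδ : ∀ y ∈ F.support, IsSplitting (δ y) T y) :
    IsSplitting (linearCombination ℝ δ F) T x := by
  classical
  refine ⟨fun z => ?_, ?_, ?_, ?_⟩
  · simp only [linearCombination_apply, Finsupp.sum, Finsupp.finsetSum_apply, Finsupp.smul_apply,
      smul_eq_mul]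
    exact Finset.sum_nonneg fun y hy => mul_nonneg (hF.nonneg y) ((hδ y hy).nonneg z)
  · intro z hz
    obtain ⟨y, hy, hzy⟩ := Finset.mem_biUnion.1 (Finsupp.support_sum hz)
    exact (hδ y hy).support_subset (Finsupp.support_smul hzy)
  · have h := sum_support_linearCombination_mul F δ fun _ => 1
    simp only [mul_one] at h
    rw [h, ← hF.sum_eq_one]
    exact Finset.sum_congr rfl fun y hy => by rw [(hδ y hy).sum_eq_one, mul_one]
  · rw [← hF.sum_smul_eq,
      ← Finset.sum_congr rfl fun y hy => congrArg (F y • ·) (hδ y hy).sum_smul_eq]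
    exact sum_support_linearCombination_smul F δ id

end Splitting

section Polyhedron

variable {E ι : Type*} [AddCommGroup E] [Module ℝ E] (g : ι → E →ₗ[ℝ] ℝ) (c : ι → ℝ)

def polyhedron : Set E := {x | ∀ i, g i x ≤ c i}

variable {g c}

lemma convex_polyhedron : Convex ℝ (polyhedron g c) := by
  simpa only [polyhedron, Set.ofPred_forall] using
    convex_iInter fun i => convex_halfSpace_le (g i).isLinear (c i)

/-- `x ± s • (y - x)` stays in the polyhedron for small `s`, since the constraints tight at `x`
are constant along this line and the others are slack. -/
lemma eq_of_mem_extremePoints_polyhedron [Finite ι] {x y : E}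
    (hx : x ∈ (polyhedron g c).extremePoints ℝ) (hy : ∀ i, g i x = c i → g i y = c i) :
    y = x := by
  have hline : ∀ᶠ s in nhds (0 : ℝ), x + s • (y - x) ∈ polyhedron g c := by
    refine Filter.eventually_all.2 fun i => ?_
    simp only [map_add, map_smul, map_sub, smul_eq_mul]
    rcases (hx.1 i).eq_or_lt with hi | hi
    · exact Filter.Eventually.of_forall fun s => by simp [hi, hy i hi]
    · have hcont : Continuous fun s : ℝ => g i x + s * (g i y - g i x) := by fun_prop
      exact (hcont.continuousAt.eventually_lt continuousAt_const (by simpa using hi)).mono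
        fun _ => le_of_lt
  obtain ⟨ε, hε, hball⟩ := Metric.eventually_nhds_iff.1 hline
  have hmem : ∀ s, |s| < ε → x + s • (y - x) ∈ polyhedron g c := fun s hs =>
    hball (by rwa [Real.dist_0_eq_abs])
  have hseg : x ∈ openSegment ℝ (x + (ε / 2) • (y - x)) (x + (-(ε / 2)) • (y - x)) :=
    ⟨1 / 2, 1 / 2, by norm_num, by norm_num, by norm_num, by module⟩
  have h := hx.2 (hmem _ (by rw [abs_of_pos (by positivity)]; linarith))
    (hmem _ (by rw [abs_neg, abs_of_pos (by positivity)]; linarith)) hseg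
  rw [add_eq_left, smul_eq_zero, sub_eq_zero] at h
  exact h.resolve_left (by positivity)

lemma finite_extremePoints_polyhedron [Finite ι] : ((polyhedron g c).extremePoints ℝ).Finite := by
  refine Set.Finite.of_finite_image (Set.toFinite ((fun x => {i | g i x = c i}) '' _))
    fun x hx y hy hxy => (eq_of_mem_extremePoints_polyhedron hx fun i hi => ?_).symm
  exact (Set.ext_iff.1 hxy i).1 hi

end Polyhedron

section PolyhedronNormed

variable {E ι : Type*} [NormedAddCommGroup E] [NormedSpace ℝ E] [FiniteDimensional ℝ E]
  {g : ι → E →ₗ[ℝ] ℝ} {c : ι → ℝ}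

lemma isClosed_polyhedron : IsClosed (polyhedron g c) := by
  simpa only [polyhedron, Set.ofPred_forall] using
    isClosed_iInter fun i => isClosed_le (g i).continuous_of_finiteDimensional continuous_const

lemma polyhedron_subset_convexHull_extremePoints [Finite ι]
    (hb : Bornology.IsBounded (polyhedron g c)) :
    polyhedron g c ⊆ convexHull ℝ ((polyhedron g c).extremePoints ℝ) := by
  rw [← (finite_extremePoints_polyhedron.isCompact_convexHull (𝕜 := ℝ)).isClosed.closure_eq,
    closure_convexHull_extremePoints (Metric.isCompact_of_isClosed_isBounded isClosed_polyhedron hb)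
      convex_polyhedron]

end PolyhedronNormed

section Persuasion

variable {Θ A K : Type*} [Fintype Θ]

/-- The polytope `Ξ^𝐚` of the paper, for the action profile `𝐚 = ap`. -/
def bestResponseRegion (u : K → Θ → A → ℝ) (ap : K → A) : Set (Θ → ℝ) :=
  {ξ | ξ ∈ stdSimplex ℝ Θ ∧ ∀ k a, ∑ θ, ξ θ * u k θ a ≤ ∑ θ, ξ θ * u k θ (ap k)}

/-- The index `Bool` encodes `∑ θ, ξ θ = 1` as the two inequalities `± ∑ θ, ξ θ ≤ ± 1`. -/
def bestResponseConstraint (u : K → Θ → A → ℝ) (ap : K → A) :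
    Θ ⊕ Bool ⊕ K × A → (Θ → ℝ) →ₗ[ℝ] ℝ
  | .inl θ => -LinearMap.proj θ
  | .inr (.inl true) => Fintype.linearCombination ℝ 1
  | .inr (.inl false) => -Fintype.linearCombination ℝ 1
  | .inr (.inr (k, a)) => Fintype.linearCombination ℝ fun θ => u k θ a - u k θ (ap k)

def bestResponseBound : Θ ⊕ Bool ⊕ K × A → ℝ
  | .inr (.inl true) => 1
  | .inr (.inl false) => -1
  | _ => 0

lemma bestResponseRegion_eq_polyhedron (u : K → Θ → A → ℝ) (ap : K → A) :
    bestResponseRegion u ap = polyhedron (bestResponseConstraint u ap) bestResponseBound := by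
  ext ξ
  simp only [bestResponseRegion, stdSimplex, le_antisymm_iff, Set.mem_ofPred_eq, polyhedron,
    bestResponseConstraint, bestResponseBound, Sum.forall, LinearMap.neg_apply, LinearMap.coe_proj,
    Function.eval, Left.neg_nonpos_iff, Bool.forall_bool, Fintype.linearCombination_apply,
    Pi.one_apply, smul_eq_mul, mul_one, neg_le_neg_iff, mul_sub, Finset.sum_sub_distrib,
    tsub_le_iff_right, zero_add, Prod.forall]
  tauto

lemma bestResponseRegion_subset_stdSimplex (u : K → Θ → A → ℝ) (ap : K → A) :
    bestResponseRegion u ap ⊆ stdSimplex ℝ Θ :=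
  fun _ hξ => hξ.1

lemma exists_isSplitting_extremePoints_bestResponseRegion [Finite A] [Finite K]
    (u : K → Θ → A → ℝ) (ap : K → A) {ξ : Θ → ℝ} (hξ : ξ ∈ bestResponseRegion u ap) :
    ∃ δ, IsSplitting δ ((bestResponseRegion u ap).extremePoints ℝ) ξ := by
  have hb : Bornology.IsBounded (bestResponseRegion u ap) :=
    (isCompact_stdSimplex ℝ Θ).isBounded.subset (bestResponseRegion_subset_stdSimplex u ap)
  rw [bestResponseRegion_eq_polyhedron] at hξ hb ⊢
  exact exists_isSplitting_of_mem_convexHull (polyhedron_subset_convexHull_extremePoints hb hξ)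

variable {u : K → Θ → A → ℝ} {us : Θ → A → ℝ} {b : K → (Θ → ℝ) → A} {ap : K → A}
  {T : Set (Θ → ℝ)} {δ : (Θ → ℝ) →₀ ℝ} {ξ : Θ → ℝ}

lemma IsSplitting.sum_mul_sum_mul (h : IsSplitting δ T ξ) (w : Θ → ℝ) :
    ∑ η ∈ δ.support, δ η * ∑ θ, η θ * w θ = ∑ θ, ξ θ * w θ :=
  h.sum_mul_map (Fintype.linearCombination ℝ w)

lemma IsSplitting.sum_mul_utility_bestResponse
    (hbBR : ∀ k ξ, (∀ θ, 0 ≤ ξ θ) → ∑ θ, ξ θ = 1 →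
      ∀ a : A, ∑ θ, ξ θ * u k θ a ≤ ∑ θ, ξ θ * u k θ (b k ξ))
    (h : IsSplitting δ (bestResponseRegion u ap) ξ) (k : K) :
    ∑ η ∈ δ.support, δ η * ∑ θ, η θ * u k θ (b k η) = ∑ θ, ξ θ * u k θ (ap k) := by
  rw [← h.sum_mul_sum_mul]
  refine Finset.sum_congr rfl fun η hη => ?_
  obtain ⟨hη, hηBR⟩ := h.support_subset hη
  rw [le_antisymm (hηBR k _) (hbBR k η hη.1 hη.2 _)]

lemma IsSplitting.le_sum_mul_senderUtility_bestResponse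
    (hbSender : ∀ k ξ, (∀ θ, 0 ≤ ξ θ) → ∑ θ, ξ θ = 1 →
      ∀ a : A, (∀ a' : A, ∑ θ, ξ θ * u k θ a' ≤ ∑ θ, ξ θ * u k θ a) →
        ∑ θ, ξ θ * us θ a ≤ ∑ θ, ξ θ * us θ (b k ξ))
    (h : IsSplitting δ (bestResponseRegion u ap) ξ) (k : K) :
    ∑ θ, ξ θ * us θ (ap k) ≤ ∑ η ∈ δ.support, δ η * ∑ θ, η θ * us θ (b k η) := by
  rw [← h.sum_mul_sum_mul]
  refine Finset.sum_le_sum fun η hη => mul_le_mul_of_nonneg_left ?_ (h.nonneg η)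
  obtain ⟨hη, hηBR⟩ := h.support_subset hη
  exact hbSender k η hη.1 hη.2 _ (hηBR k)

variable {F : (Θ → ℝ) →₀ ℝ} {δ : (Θ → ℝ) → (Θ → ℝ) →₀ ℝ}

lemma sum_linearCombination_utility_bestResponse
    (hbBR : ∀ k ξ, (∀ θ, 0 ≤ ξ θ) → ∑ θ, ξ θ = 1 →
      ∀ a : A, ∑ θ, ξ θ * u k θ a ≤ ∑ θ, ξ θ * u k θ (b k ξ))
    (hδ : ∀ ξ ∈ F.support, IsSplitting (δ ξ) (bestResponseRegion u fun k => b k ξ) ξ) (k : K) :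
    ∑ η ∈ (linearCombination ℝ δ F).support,
        linearCombination ℝ δ F η * ∑ θ, η θ * u k θ (b k η) =
      ∑ ξ ∈ F.support, F ξ * ∑ θ, ξ θ * u k θ (b k ξ) := by
  rw [sum_support_linearCombination_mul]
  exact Finset.sum_congr rfl fun ξ hξ => by rw [(hδ ξ hξ).sum_mul_utility_bestResponse hbBR]

lemma le_sum_linearCombination_senderUtility_bestResponse
    (hbSender : ∀ k ξ, (∀ θ, 0 ≤ ξ θ) → ∑ θ, ξ θ = 1 →
      ∀ a : A, (∀ a' : A, ∑ θ, ξ θ * u k θ a' ≤ ∑ θ, ξ θ * u k θ a) →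
        ∑ θ, ξ θ * us θ a ≤ ∑ θ, ξ θ * us θ (b k ξ))
    (hF : ∀ ξ, 0 ≤ F ξ)
    (hδ : ∀ ξ ∈ F.support, IsSplitting (δ ξ) (bestResponseRegion u fun k => b k ξ) ξ) (k : K) :
    ∑ ξ ∈ F.support, F ξ * ∑ θ, ξ θ * us θ (b k ξ) ≤
      ∑ η ∈ (linearCombination ℝ δ F).support,
        linearCombination ℝ δ F η * ∑ θ, η θ * us θ (b k η) := by
  rw [sum_support_linearCombination_mul]
  exact Finset.sum_le_sum fun ξ hξ => mul_le_mul_of_nonneg_left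
    ((hδ ξ hξ).le_sum_mul_senderUtility_bestResponse hbSender k) (hF ξ)

end Persuasion

theorem exists_menu_supported_on_vertices_general
    {Θ A K : Type*} [Fintype Θ] [Fintype A] [Fintype K]
    (μ : Θ → ℝ)
    (u : K → Θ → A → ℝ)
    (us : Θ → A → ℝ)
    (lam : K → ℝ) (hlam : ∀ k, 0 ≤ lam k)
    -- `b k ξ` is the receiver's best response at posterior `ξ` for type `k`,
    -- with ties broken in favor of the sender:
    (b : K → (Θ → ℝ) → A)
    (hbBR : ∀ k ξ, (∀ θ, 0 ≤ ξ θ) → ∑ θ, ξ θ = 1 →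
      ∀ a : A, ∑ θ, ξ θ * u k θ a ≤ ∑ θ, ξ θ * u k θ (b k ξ))
    (hbSender : ∀ k ξ, (∀ θ, 0 ≤ ξ θ) → ∑ θ, ξ θ = 1 →
      ∀ a : A, (∀ a' : A, ∑ θ, ξ θ * u k θ a' ≤ ∑ θ, ξ θ * u k θ a) →
        ∑ θ, ξ θ * us θ a ≤ ∑ θ, ξ θ * us θ (b k ξ))
    -- the given menu: finitely supported probability distributions over posteriors
    (γ : K → ((Θ → ℝ) →₀ ℝ))
    (hγnn : ∀ k ξ, 0 ≤ γ k ξ)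
    (hγpost : ∀ k, ∀ ξ ∈ (γ k).support, (∀ θ, 0 ≤ ξ θ) ∧ ∑ θ, ξ θ = 1)
    (hγone : ∀ k, ∑ ξ ∈ (γ k).support, γ k ξ = 1)
    -- Bayes plausibility
    (hγbayes : ∀ k θ, ∑ ξ ∈ (γ k).support, γ k ξ * ξ θ = μ θ)
    -- incentive compatibility
    (hγIC : ∀ k k', k ≠ k' →
      ∑ ξ ∈ (γ k').support, γ k' ξ * ∑ θ, ξ θ * u k θ (b k ξ) ≤
        ∑ ξ ∈ (γ k).support, γ k ξ * ∑ θ, ξ θ * u k θ (b k ξ)) :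
    ∃ γbar : K → ((Θ → ℝ) →₀ ℝ),
      (∀ k ξ, 0 ≤ γbar k ξ) ∧
      (∀ k, ∀ ξ ∈ (γbar k).support, (∀ θ, 0 ≤ ξ θ) ∧ ∑ θ, ξ θ = 1) ∧
      (∀ k, ∑ ξ ∈ (γbar k).support, γbar k ξ = 1) ∧
      (∀ k θ, ∑ ξ ∈ (γbar k).support, γbar k ξ * ξ θ = μ θ) ∧
      (∀ k k', k ≠ k' →
        ∑ ξ ∈ (γbar k').support, γbar k' ξ * ∑ θ, ξ θ * u k θ (b k ξ) ≤
          ∑ ξ ∈ (γbar k).support, γbar k ξ * ∑ θ, ξ θ * u k θ (b k ξ)) ∧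
      -- every distribution in the new menu is supported on `Ξ*`
      (∀ k, ((γbar k).support : Set (Θ → ℝ)) ⊆
        ⋃ ap : K → A, Set.extremePoints ℝ
          {ξ : Θ → ℝ | ((∀ θ, 0 ≤ ξ θ) ∧ ∑ θ, ξ θ = 1) ∧
            ∀ k' : K, ∀ a' : A,
              ∑ θ, ξ θ * u k' θ a' ≤ ∑ θ, ξ θ * u k' θ (ap k')}) ∧
      -- the sender's expected utility does not decrease
      (∑ k, lam k * ∑ ξ ∈ (γ k).support, γ k ξ * ∑ θ, ξ θ * us θ (b k ξ) ≤
        ∑ k, lam k * ∑ ξ ∈ (γbar k).support, γbar k ξ * ∑ θ, ξ θ * us θ (b k ξ)) := by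
  choose! δ hδ using fun ξ (hξ : ξ ∈ stdSimplex ℝ Θ) =>
    exists_isSplitting_extremePoints_bestResponseRegion u (fun k => b k ξ)
      ⟨hξ, fun k => hbBR k ξ hξ.1 hξ.2⟩
  have hγ : ∀ k, IsSplitting (γ k) (stdSimplex ℝ Θ) μ := fun k =>
    ⟨hγnn k, hγpost k, hγone k, sum_smul_eq_iff_forall_sum_mul_apply.2 (hγbayes k)⟩
  have hδγ : ∀ k, ∀ ξ ∈ (γ k).support,
      IsSplitting (δ ξ) ((bestResponseRegion u fun k => b k ξ).extremePoints ℝ) ξ :=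
    fun k ξ hξ => hδ ξ ((hγ k).support_subset hξ)
  have hδR : ∀ k, ∀ ξ ∈ (γ k).support,
      IsSplitting (δ ξ) (bestResponseRegion u fun k => b k ξ) ξ :=
    fun k ξ hξ => (hδγ k ξ hξ).mono extremePoints_subset
  have hγbar : ∀ k, IsSplitting (linearCombination ℝ δ (γ k))
      (⋃ ap, (bestResponseRegion u ap).extremePoints ℝ) μ := fun k =>
    (hγ k).linearCombination fun ξ hξ => (hδγ k ξ hξ).mono (Set.subset_iUnion_of_subset _ le_rfl)
  refine ⟨fun k => linearCombination ℝ δ (γ k), fun k => (hγbar k).nonneg,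
    fun k => (hγbar k).support_subset.trans (Set.iUnion_subset fun ap =>
      extremePoints_subset.trans (bestResponseRegion_subset_stdSimplex u ap)),
    fun k => (hγbar k).sum_eq_one,
    fun k => sum_smul_eq_iff_forall_sum_mul_apply.1 (hγbar k).sum_smul_eq, fun k k' hkk' => ?_,
    fun k => (hγbar k).support_subset,
    Finset.sum_le_sum fun k _ => mul_le_mul_of_nonneg_left ?_ (hlam k)⟩
  · rw [sum_linearCombination_utility_bestResponse hbBR (hδR k'),
      sum_linearCombination_utility_bestResponse hbBR (hδR k)]
    exact hγIC k k' hkk'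
  · exact le_sum_linearCombination_senderUtility_bestResponse hbSender (hγnn k) (hδR k) k

/-- Single-receiver Bayesian persuasion with type reporting: for every
incentive compatible menu `(γ k)` of finitely supported distributions over posteriors, there
exists an incentive compatible menu `(γbar k)` supported on the finite set `Ξ*` (the union, over
action profiles `ap : K → A`, of the extreme points of the polytopes `Ξ^ap`) whose sender expected
utility is at least that of `(γ k)`. -/
theorem exists_menu_supported_on_vertices
    {Θ A K : Type*} [Fintype Θ] [Fintype A] [Fintype K]
    [Nonempty Θ] [Nonempty A] [Nonempty K]
    (μ : Θ → ℝ) (hμpos : ∀ θ, 0 < μ θ) (hμsum : ∑ θ, μ θ = 1)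
    (u : K → Θ → A → ℝ) (hu : ∀ k θ a, u k θ a ∈ Set.Icc (0 : ℝ) 1)
    (us : Θ → A → ℝ) (hus : ∀ θ a, us θ a ∈ Set.Icc (0 : ℝ) 1)
    (lam : K → ℝ) (hlam : ∀ k, 0 ≤ lam k) (hlamsum : ∑ k, lam k = 1)
    -- `b k ξ` is the receiver's best response at posterior `ξ` for type `k`,
    -- with ties broken in favor of the sender:
    (b : K → (Θ → ℝ) → A)
    (hbBR : ∀ k ξ, (∀ θ, 0 ≤ ξ θ) → ∑ θ, ξ θ = 1 →
      ∀ a : A, ∑ θ, ξ θ * u k θ a ≤ ∑ θ, ξ θ * u k θ (b k ξ))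
    (hbSender : ∀ k ξ, (∀ θ, 0 ≤ ξ θ) → ∑ θ, ξ θ = 1 →
      ∀ a : A, (∀ a' : A, ∑ θ, ξ θ * u k θ a' ≤ ∑ θ, ξ θ * u k θ a) →
        ∑ θ, ξ θ * us θ a ≤ ∑ θ, ξ θ * us θ (b k ξ))
    -- the given menu: finitely supported probability distributions over posteriors
    (γ : K → ((Θ → ℝ) →₀ ℝ))
    (hγnn : ∀ k ξ, 0 ≤ γ k ξ)
    (hγpost : ∀ k, ∀ ξ ∈ (γ k).support, (∀ θ, 0 ≤ ξ θ) ∧ ∑ θ, ξ θ = 1)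
    (hγone : ∀ k, ∑ ξ ∈ (γ k).support, γ k ξ = 1)
    -- Bayes plausibility
    (hγbayes : ∀ k θ, ∑ ξ ∈ (γ k).support, γ k ξ * ξ θ = μ θ)
    -- incentive compatibility
    (hγIC : ∀ k k', k ≠ k' →
      ∑ ξ ∈ (γ k').support, γ k' ξ * ∑ θ, ξ θ * u k θ (b k ξ) ≤
        ∑ ξ ∈ (γ k).support, γ k ξ * ∑ θ, ξ θ * u k θ (b k ξ)) :
    ∃ γbar : K → ((Θ → ℝ) →₀ ℝ),
      (∀ k ξ, 0 ≤ γbar k ξ) ∧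
      (∀ k, ∀ ξ ∈ (γbar k).support, (∀ θ, 0 ≤ ξ θ) ∧ ∑ θ, ξ θ = 1) ∧
      (∀ k, ∑ ξ ∈ (γbar k).support, γbar k ξ = 1) ∧
      (∀ k θ, ∑ ξ ∈ (γbar k).support, γbar k ξ * ξ θ = μ θ) ∧
      (∀ k k', k ≠ k' →
        ∑ ξ ∈ (γbar k').support, γbar k' ξ * ∑ θ, ξ θ * u k θ (b k ξ) ≤
          ∑ ξ ∈ (γbar k).support, γbar k ξ * ∑ θ, ξ θ * u k θ (b k ξ)) ∧
      -- every distribution in the new menu is supported on `Ξ*`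
      (∀ k, ((γbar k).support : Set (Θ → ℝ)) ⊆
        ⋃ ap : K → A, Set.extremePoints ℝ
          {ξ : Θ → ℝ | ((∀ θ, 0 ≤ ξ θ) ∧ ∑ θ, ξ θ = 1) ∧
            ∀ k' : K, ∀ a' : A,
              ∑ θ, ξ θ * u k' θ a' ≤ ∑ θ, ξ θ * u k' θ (ap k')}) ∧
      -- the sender's expected utility does not decrease
      (∑ k, lam k * ∑ ξ ∈ (γ k).support, γ k ξ * ∑ θ, ξ θ * us θ (b k ξ) ≤
        ∑ k, lam k * ∑ ξ ∈ (γbar k).support, γbar k ξ * ∑ θ, ξ θ * us θ (b k ξ)) :=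
  exists_menu_supported_on_vertices_general μ u us lam hlam b hbBR hbSender γ hγnn hγpost hγone
    hγbayes hγIC
end

section
/- There exists a persuasive, incentive compatible direct menu (φ^k)_{k∈K} whose sender expected utility is greater than or equal to the sender expected utility of every incentive compatible menu (γ^k)_{k∈K} of finitely supported distributions over posteriors. (In single-receiver instances, there always exists an optimal menu of direct and persuasive signaling schemes.) -/
/-!
Revelation principle plus compactness. Given an incentive compatible menu of posterior
distributions, let each type's direct scheme recommend, in place of the posterior `ξ`, the best
response of that type at `ξ`. Following the recommendation is optimal and reproduces both players'
payoffs, while any misreport combined with any disobedience yields at most the best-response payoff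
at the misreported type's posteriors, which the menu's incentive compatibility bounds. So every
such menu is matched, in sender value, by a menu in the set of direct menus satisfying the strong
incentive constraints; this set is a closed subset of a product of simplices, nonempty (it contains
the uninformative menu), and a maximizer of the continuous sender value on it is the optimal menu.
-/

open Finset

noncomputable section

namespace BayesianPersuasion

variable {Θ A K : Type*} [Fintype Θ]

section DirectMenus

variable [Fintype A]

/-- Receiver's expected utility `v` under `φ` when recommendation `a` is answered by `g a`. -/
def deviationPayoff (μ : Θ → ℝ) (v : Θ → A → ℝ) (φ : Θ → A → ℝ) (g : A → A) : ℝ :=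
  ∑ a, ∑ θ, μ θ * φ θ a * v θ (g a)

def IsPersuasive (μ : Θ → ℝ) (v : Θ → A → ℝ) (φ : Θ → A → ℝ) : Prop :=
  ∀ a a', ∑ θ, μ θ * φ θ a * v θ a' ≤ ∑ θ, μ θ * φ θ a * v θ a

/-- Incentive compatibility is imposed against a misreport `k'` combined with any way `g` of
disobeying the recommendations: this is a closed condition, and it implies the `sup'` form. -/
def feasibleDirectMenus (μ : Θ → ℝ) (u : K → Θ → A → ℝ) : Set (K → Θ → A → ℝ) :=
  {φ | (∀ k θ, φ k θ ∈ stdSimplex ℝ A) ∧ (∀ k, IsPersuasive μ (u k) (φ k)) ∧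
    ∀ k k' g, deviationPayoff μ (u k) (φ k') g ≤ deviationPayoff μ (u k) (φ k) id}

variable (μ : Θ → ℝ) (u : K → Θ → A → ℝ)

theorem isClosed_feasibleDirectMenus : IsClosed (feasibleDirectMenus μ u) := by
  simp only [feasibleDirectMenus, IsPersuasive, deviationPayoff, Set.ofPred_and,
    Set.ofPred_forall]
  refine .inter (isClosed_iInter fun _ => isClosed_iInter fun _ =>
    (isClosed_stdSimplex ℝ A).preimage (by fun_prop)) (.inter ?_ ?_) <;>
  exact isClosed_iInter fun _ => isClosed_iInter fun _ => isClosed_iInter fun _ =>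
    isClosed_le (by fun_prop) (by fun_prop)

theorem isCompact_feasibleDirectMenus : IsCompact (feasibleDirectMenus μ u) := by
  refine .of_isClosed_subset (isCompact_univ_pi fun _ => isCompact_univ_pi fun _ =>
    isCompact_stdSimplex ℝ A) (isClosed_feasibleDirectMenus μ u) fun φ hφ => ?_
  simpa [Set.mem_univ_pi] using hφ.1

theorem sum_mul_sum_mul_eq_deviationPayoff_id (v : Θ → A → ℝ) (φ : Θ → A → ℝ) :
    ∑ θ, μ θ * ∑ a, φ θ a * v θ a = deviationPayoff μ v φ id := by
  simp only [deviationPayoff, mul_sum, ← mul_assoc, id]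
  exact sum_comm

theorem exists_deviationPayoff_eq_sum_sup' [Nonempty A] (v : Θ → A → ℝ) (φ : Θ → A → ℝ) :
    ∃ g, ∑ a, univ.sup' univ_nonempty (fun a' => ∑ θ, μ θ * φ θ a * v θ a') =
      deviationPayoff μ v φ g := by
  choose g _ hg using fun a =>
    exists_mem_eq_sup' univ_nonempty fun a' => ∑ θ, μ θ * φ θ a * v θ a'
  exact ⟨g, sum_congr rfl fun a _ => hg a⟩

end DirectMenus

section Posteriors

variable {μ : Θ → ℝ} {γ : (Θ → ℝ) →₀ ℝ}

structure IsPosteriorDistribution (γ : (Θ → ℝ) →₀ ℝ) : Prop where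
  nonneg : ∀ ξ, 0 ≤ γ ξ
  mem_stdSimplex : ∀ ξ ∈ γ.support, ξ ∈ stdSimplex ℝ Θ

def IsBestResponse (v : Θ → A → ℝ) (β : (Θ → ℝ) → A) : Prop :=
  ∀ ξ ∈ stdSimplex ℝ Θ, ∀ a, ∑ θ, ξ θ * v θ a ≤ ∑ θ, ξ θ * v θ (β ξ)

def posteriorPayoff (γ : (Θ → ℝ) →₀ ℝ) (v : Θ → A → ℝ) (β : (Θ → ℝ) → A) : ℝ :=
  ∑ ξ ∈ γ.support, γ ξ * ∑ θ, ξ θ * v θ (β ξ)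

theorem posteriorPayoff_le_of_isBestResponse (hγ : IsPosteriorDistribution γ)
    {v : Θ → A → ℝ} {β : (Θ → ℝ) → A} (hβ : IsBestResponse v β) (β' : (Θ → ℝ) → A) :
    posteriorPayoff γ v β' ≤ posteriorPayoff γ v β :=
  sum_le_sum fun ξ hξ =>
    mul_le_mul_of_nonneg_left (hβ ξ (hγ.mem_stdSimplex ξ hξ) (β' ξ)) (hγ.nonneg ξ)

theorem isPosteriorDistribution_single {ξ : Θ → ℝ} (hξ : ξ ∈ stdSimplex ℝ Θ) :
    IsPosteriorDistribution (Finsupp.single ξ (1 : ℝ)) where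
  nonneg := Finsupp.single_nonneg.2 zero_le_one
  mem_stdSimplex _ h := by
    rwa [mem_singleton.1 (Finsupp.support_single_subset h)]

variable [DecidableEq A]

/-- Revelation principle: since `γ ξ * ξ θ / μ θ` is the probability of the posterior `ξ` in
state `θ`, this scheme recommends `β ξ` exactly when the menu `γ` would have induced `ξ`. -/
def recommendationScheme (μ : Θ → ℝ) (γ : (Θ → ℝ) →₀ ℝ) (β : (Θ → ℝ) → A) : Θ → A → ℝ :=
  fun θ a => (∑ ξ ∈ γ.support with β ξ = a, γ ξ * ξ θ) / μ θ

variable (hμ : ∀ θ, μ θ ≠ 0) (β : (Θ → ℝ) → A)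
include hμ

theorem sum_mul_recommendationScheme_mul (a : A) (w : Θ → ℝ) :
    ∑ θ, μ θ * recommendationScheme μ γ β θ a * w θ =
      ∑ ξ ∈ γ.support with β ξ = a, γ ξ * ∑ θ, ξ θ * w θ := by
  simp only [recommendationScheme, mul_div_cancel₀ _ (hμ _), sum_mul, mul_sum]
  rw [sum_comm]
  exact sum_congr rfl fun _ _ => sum_congr rfl fun _ _ => by ring

theorem isPersuasive_recommendationScheme (hγ : IsPosteriorDistribution γ) {v : Θ → A → ℝ}
    (hβ : IsBestResponse v β) : IsPersuasive μ v (recommendationScheme μ γ β) := by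
  intro a a'
  rw [sum_mul_recommendationScheme_mul hμ, sum_mul_recommendationScheme_mul hμ]
  refine sum_le_sum fun ξ hξ => ?_
  obtain ⟨hξγ, rfl⟩ := mem_filter.1 hξ
  exact mul_le_mul_of_nonneg_left (hβ ξ (hγ.mem_stdSimplex ξ hξγ) a') (hγ.nonneg ξ)

variable [Fintype A]

theorem deviationPayoff_recommendationScheme (v : Θ → A → ℝ) (g : A → A) :
    deviationPayoff μ v (recommendationScheme μ γ β) g = posteriorPayoff γ v (g ∘ β) := by
  rw [deviationPayoff, posteriorPayoff, ← sum_fiberwise γ.support β]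
  refine sum_congr rfl fun a _ => ?_
  rw [sum_mul_recommendationScheme_mul hμ]
  refine sum_congr rfl fun ξ hξ => ?_
  rw [Function.comp_apply, (mem_filter.1 hξ).2]

theorem recommendationScheme_mem_stdSimplex (hγ : IsPosteriorDistribution γ)
    (hbary : ∀ θ, ∑ ξ ∈ γ.support, γ ξ * ξ θ = μ θ) (θ : Θ) :
    recommendationScheme μ γ β θ ∈ stdSimplex ℝ A := by
  refine ⟨fun a => ?_, ?_⟩
  · have hpos : ∀ s : Finset (Θ → ℝ), s ⊆ γ.support → 0 ≤ ∑ ξ ∈ s, γ ξ * ξ θ := fun s hs =>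
      sum_nonneg fun ξ hξ => mul_nonneg (hγ.nonneg ξ) ((hγ.mem_stdSimplex ξ (hs hξ)).1 θ)
    exact div_nonneg (hpos _ (filter_subset _ _)) (hbary θ ▸ hpos _ subset_rfl)
  · simp only [recommendationScheme]
    rw [← sum_div, sum_fiberwise, hbary, div_self (hμ θ)]

theorem recommendationScheme_mem_feasibleDirectMenus {γ : K → (Θ → ℝ) →₀ ℝ}
    {u : K → Θ → A → ℝ} {b : K → (Θ → ℝ) → A} (hb : ∀ k, IsBestResponse (u k) (b k))
    (hγ : ∀ k, IsPosteriorDistribution (γ k))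
    (hbary : ∀ k θ, ∑ ξ ∈ (γ k).support, γ k ξ * ξ θ = μ θ)
    (hIC : ∀ k k', k ≠ k' →
      posteriorPayoff (γ k') (u k) (b k) ≤ posteriorPayoff (γ k) (u k) (b k)) :
    (fun k => recommendationScheme μ (γ k) (b k)) ∈ feasibleDirectMenus μ u := by
  refine ⟨fun k => recommendationScheme_mem_stdSimplex hμ _ (hγ k) (hbary k),
    fun k => isPersuasive_recommendationScheme hμ _ (hγ k) (hb k), fun k k' g => ?_⟩
  rw [deviationPayoff_recommendationScheme hμ, deviationPayoff_recommendationScheme hμ]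
  calc posteriorPayoff (γ k') (u k) (g ∘ b k')
      ≤ posteriorPayoff (γ k') (u k) (b k) :=
        posteriorPayoff_le_of_isBestResponse (hγ k') (hb k) _
    _ ≤ posteriorPayoff (γ k) (u k) (b k) := by
      rcases eq_or_ne k k' with rfl | hne
      exacts [le_rfl, hIC k k' hne]

theorem feasibleDirectMenus_nonempty (hμ_mem : μ ∈ stdSimplex ℝ Θ) {u : K → Θ → A → ℝ}
    {b : K → (Θ → ℝ) → A} (hb : ∀ k, IsBestResponse (u k) (b k)) :
    (feasibleDirectMenus μ u).Nonempty :=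
  ⟨_, recommendationScheme_mem_feasibleDirectMenus hμ (γ := fun _ => Finsupp.single μ 1) hb
    (fun _ => isPosteriorDistribution_single hμ_mem) (fun _ _ => by simp) fun _ _ _ => le_rfl⟩

end Posteriors

end BayesianPersuasion

open BayesianPersuasion

theorem exists_optimal_direct_persuasive_menu_general
    {Θ A K : Type*} [Fintype Θ] [Fintype A] [Fintype K]
    [Nonempty A]
    (μ : Θ → ℝ) (hμpos : ∀ θ, 0 < μ θ) (hμsum : ∑ θ, μ θ = 1)
    (u : K → Θ → A → ℝ)
    (us : Θ → A → ℝ)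
    (lam : K → ℝ)
    -- `b k ξ` is the receiver's best response at posterior `ξ` for type `k`,
    -- with ties broken in favor of the sender:
    (b : K → (Θ → ℝ) → A)
    (hbBR : ∀ k ξ, (∀ θ, 0 ≤ ξ θ) → ∑ θ, ξ θ = 1 →
      ∀ a : A, ∑ θ, ξ θ * u k θ a ≤ ∑ θ, ξ θ * u k θ (b k ξ)) :
    ∃ φ : K → Θ → A → ℝ,
      -- `φ` is a direct menu: `φ k θ` is a distribution over action recommendations
      (∀ k θ a, 0 ≤ φ k θ a) ∧
      (∀ k θ, ∑ a, φ k θ a = 1) ∧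
      -- persuasiveness
      (∀ k, ∀ a a' : A,
        ∑ θ, μ θ * φ k θ a * u k θ a' ≤ ∑ θ, μ θ * φ k θ a * u k θ a) ∧
      -- incentive compatibility of the direct menu
      (∀ k k', k ≠ k' →
        ∑ a, Finset.univ.sup' Finset.univ_nonempty
            (fun a' : A => ∑ θ, μ θ * φ k' θ a * u k θ a') ≤
          ∑ a, ∑ θ, μ θ * φ k θ a * u k θ a) ∧
      -- optimality: it beats every incentive compatible menu of distributions over posteriors
      (∀ γ : K → ((Θ → ℝ) →₀ ℝ),
        (∀ k ξ, 0 ≤ γ k ξ) →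
        (∀ k, ∀ ξ ∈ (γ k).support, (∀ θ, 0 ≤ ξ θ) ∧ ∑ θ, ξ θ = 1) →
        (∀ k, ∑ ξ ∈ (γ k).support, γ k ξ = 1) →
        (∀ k θ, ∑ ξ ∈ (γ k).support, γ k ξ * ξ θ = μ θ) →
        (∀ k k', k ≠ k' →
          ∑ ξ ∈ (γ k').support, γ k' ξ * ∑ θ, ξ θ * u k θ (b k ξ) ≤
            ∑ ξ ∈ (γ k).support, γ k ξ * ∑ θ, ξ θ * u k θ (b k ξ)) →
        ∑ k, lam k * ∑ ξ ∈ (γ k).support, γ k ξ * ∑ θ, ξ θ * us θ (b k ξ) ≤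
          ∑ k, lam k * ∑ θ, μ θ * ∑ a, φ k θ a * us θ a) := by
  classical
  have hμ : ∀ θ, μ θ ≠ 0 := fun θ => (hμpos θ).ne'
  have hb : ∀ k, IsBestResponse (u k) (b k) := fun k ξ hξ => hbBR k ξ hξ.1 hξ.2
  obtain ⟨φ, ⟨hφ, hpers, hIC⟩, hmax⟩ := (isCompact_feasibleDirectMenus μ u).exists_isMaxOn
    (feasibleDirectMenus_nonempty hμ ⟨fun θ => (hμpos θ).le, hμsum⟩ hb)
    (f := fun φ => ∑ k, lam k * ∑ θ, μ θ * ∑ a, φ k θ a * us θ a)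
    (Continuous.continuousOn (by fun_prop))
  refine ⟨φ, fun k θ => (hφ k θ).1, fun k θ => (hφ k θ).2, hpers, fun k k' _ => ?_,
    fun γ hγ0 hγpost _ hbary hγIC => ?_⟩
  · obtain ⟨g, hg⟩ := exists_deviationPayoff_eq_sum_sup' μ (u k) (φ k')
    exact hg ▸ hIC k k' g
  · have hψ := recommendationScheme_mem_feasibleDirectMenus hμ hb
      (fun k => ⟨hγ0 k, hγpost k⟩) hbary hγIC
    simpa only [Set.mem_ofPred_eq, sum_mul_sum_mul_eq_deviationPayoff_id,
      deviationPayoff_recommendationScheme hμ, Function.id_comp, posteriorPayoff] using hmax hψ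

/-- Single-receiver Bayesian persuasion with type reporting: there exists a
persuasive, incentive compatible direct menu whose sender expected utility is at least the sender
expected utility of every incentive compatible menu of finitely supported distributions over
posteriors. -/
theorem exists_optimal_direct_persuasive_menu
    {Θ A K : Type*} [Fintype Θ] [Fintype A] [Fintype K]
    [Nonempty Θ] [Nonempty A] [Nonempty K]
    (μ : Θ → ℝ) (hμpos : ∀ θ, 0 < μ θ) (hμsum : ∑ θ, μ θ = 1)
    (u : K → Θ → A → ℝ) (hu : ∀ k θ a, u k θ a ∈ Set.Icc (0 : ℝ) 1)
    (us : Θ → A → ℝ) (hus : ∀ θ a, us θ a ∈ Set.Icc (0 : ℝ) 1)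
    (lam : K → ℝ) (hlam : ∀ k, 0 ≤ lam k) (hlamsum : ∑ k, lam k = 1)
    -- `b k ξ` is the receiver's best response at posterior `ξ` for type `k`,
    -- with ties broken in favor of the sender:
    (b : K → (Θ → ℝ) → A)
    (hbBR : ∀ k ξ, (∀ θ, 0 ≤ ξ θ) → ∑ θ, ξ θ = 1 →
      ∀ a : A, ∑ θ, ξ θ * u k θ a ≤ ∑ θ, ξ θ * u k θ (b k ξ))
    (hbSender : ∀ k ξ, (∀ θ, 0 ≤ ξ θ) → ∑ θ, ξ θ = 1 →
      ∀ a : A, (∀ a' : A, ∑ θ, ξ θ * u k θ a' ≤ ∑ θ, ξ θ * u k θ a) →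
        ∑ θ, ξ θ * us θ a ≤ ∑ θ, ξ θ * us θ (b k ξ)) :
    ∃ φ : K → Θ → A → ℝ,
      -- `φ` is a direct menu: `φ k θ` is a distribution over action recommendations
      (∀ k θ a, 0 ≤ φ k θ a) ∧
      (∀ k θ, ∑ a, φ k θ a = 1) ∧
      -- persuasiveness
      (∀ k, ∀ a a' : A,
        ∑ θ, μ θ * φ k θ a * u k θ a' ≤ ∑ θ, μ θ * φ k θ a * u k θ a) ∧
      -- incentive compatibility of the direct menu
      (∀ k k', k ≠ k' →
        ∑ a, Finset.univ.sup' Finset.univ_nonempty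
            (fun a' : A => ∑ θ, μ θ * φ k' θ a * u k θ a') ≤
          ∑ a, ∑ θ, μ θ * φ k θ a * u k θ a) ∧
      -- optimality: it beats every incentive compatible menu of distributions over posteriors
      (∀ γ : K → ((Θ → ℝ) →₀ ℝ),
        (∀ k ξ, 0 ≤ γ k ξ) →
        (∀ k, ∀ ξ ∈ (γ k).support, (∀ θ, 0 ≤ ξ θ) ∧ ∑ θ, ξ θ = 1) →
        (∀ k, ∑ ξ ∈ (γ k).support, γ k ξ = 1) →
        (∀ k θ, ∑ ξ ∈ (γ k).support, γ k ξ * ξ θ = μ θ) →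
        (∀ k k', k ≠ k' →
          ∑ ξ ∈ (γ k').support, γ k' ξ * ∑ θ, ξ θ * u k θ (b k ξ) ≤
            ∑ ξ ∈ (γ k).support, γ k ξ * ∑ θ, ξ θ * u k θ (b k ξ)) →
        ∑ k, lam k * ∑ ξ ∈ (γ k).support, γ k ξ * ∑ θ, ξ θ * us θ (b k ξ) ≤
          ∑ k, lam k * ∑ θ, μ θ * ∑ a, φ k θ a * us θ a) :=
  exists_optimal_direct_persuasive_menu_general μ hμpos hμsum u us lam b hbBR
end
end

section
/- If (γ^k)_{k∈𝒦} is an incentive compatible menu, then there exists a persuasive, incentive compatible direct marginal menu (x^k)_{k∈𝒦} such that for every type k ∈ 𝒦 and every state θ ∈ Θ: μ_θ x^k_θ ≥ Σ_{ξ : b^k_ξ = a1} γ^k_ξ ξ_θ; that is, in every state the joint probability that the receiver plays a1 weakly increases when passing to the direct marginal menu. -/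
/-!
Replace each posterior `ξ` of the menu `γ^k` by the action `b^k_ξ` it induces and record only the
joint law of state and recommended action: `x^k_θ` is the conditional probability, given `θ`, that
`γ^k` leads type `k` to play `a1`. Obedience holds because every posterior pooled into a
recommendation `a` already makes `a` a best response. A type `k` misreporting `k'` in the direct
menu can only react to the pooled recommendation of `γ^{k'}`, which is coarser than reacting to
the posteriors of `γ^{k'}`, so its deviation payoff is bounded by the one in the original menu,
while truthful reporting yields exactly the original truthful payoff.
-/

open Finset

noncomputable section

/-- The receiver's best response at posterior `ξ` for type `k`, with binary actions
(`true` = a1, `false` = a0) and ties broken in favor of `a1`: the receiver plays `a1`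
iff the expected utility of `a1` is at least that of `a0`. -/
noncomputable def bestA1 {Θ 𝒦 : Type*} [Fintype Θ]
    (u : 𝒦 → Θ → Bool → ℝ) (k : 𝒦) (ξ : Θ → ℝ) : Bool :=
  if ∑ θ, ξ θ * u k θ false ≤ ∑ θ, ξ θ * u k θ true then true else false

theorem sum_mul_le_sum_mul_bestA1 {Θ 𝒦 : Type*} [Fintype Θ]
    (u : 𝒦 → Θ → Bool → ℝ) (k : 𝒦) (ξ : Θ → ℝ) (a : Bool) :
    ∑ θ, ξ θ * u k θ a ≤ ∑ θ, ξ θ * u k θ (bestA1 u k ξ) := by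
  unfold bestA1
  split_ifs with h <;> cases a <;> linarith

theorem Finset.sum_ite_eq_true_add_sum_ite_eq_false {ι M : Type*} [AddCommMonoid M]
    (s : Finset ι) (b : ι → Bool) (f : ι → M) :
    ∑ i ∈ s, (if b i = true then f i else 0) + ∑ i ∈ s, (if b i = false then f i else 0) =
      ∑ i ∈ s, f i := by
  rw [← sum_add_distrib]
  exact sum_congr rfl fun i _ => by cases b i <;> simp

theorem exists_mem_Icc_mul_eq {m s t : ℝ} (hm : 0 < m) (hs : 0 ≤ s) (ht : 0 ≤ t)
    (hst : s + t = m) : ∃ y ∈ Set.Icc (0 : ℝ) 1, m * y = s ∧ m * (1 - y) = t := by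
  refine ⟨s / m, ⟨by positivity, (div_le_one hm).2 (by linarith)⟩, ?_, ?_⟩
  · field_simp
  · field_simp
    linarith

section jointMass

variable {Θ : Type*} (γ : (Θ → ℝ) →₀ ℝ) (b : (Θ → ℝ) → Bool)

def jointMass (a : Bool) (θ : Θ) : ℝ :=
  ∑ ξ ∈ γ.support, if b ξ = a then γ ξ * ξ θ else 0

variable {γ}

theorem jointMass_nonneg (hγ : ∀ ξ, 0 ≤ γ ξ) (hpost : ∀ ξ ∈ γ.support, ∀ θ, 0 ≤ ξ θ)
    (a : Bool) (θ : Θ) : 0 ≤ jointMass γ b a θ :=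
  sum_nonneg fun ξ hξ => by
    split_ifs
    exacts [mul_nonneg (hγ ξ) (hpost ξ hξ θ), le_rfl]

variable (γ)

theorem jointMass_true_add_false (θ : Θ) :
    jointMass γ b true θ + jointMass γ b false θ = ∑ ξ ∈ γ.support, γ ξ * ξ θ :=
  sum_ite_eq_true_add_sum_ite_eq_false _ _ _

variable [Fintype Θ]

theorem sum_jointMass_mul (a : Bool) (v : Θ → ℝ) :
    ∑ θ, jointMass γ b a θ * v θ =
      ∑ ξ ∈ γ.support, if b ξ = a then γ ξ * ∑ θ, ξ θ * v θ else 0 := by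
  simp only [jointMass, sum_mul]
  rw [sum_comm]
  refine sum_congr rfl fun ξ _ => ?_
  split_ifs
  · simp only [mul_sum, mul_assoc]
  · simp

theorem sum_jointMass_mul_add (w : Θ → Bool → ℝ) :
    ∑ θ, (jointMass γ b true θ * w θ true + jointMass γ b false θ * w θ false) =
      ∑ ξ ∈ γ.support, γ ξ * ∑ θ, ξ θ * w θ (b ξ) := by
  rw [sum_add_distrib, sum_jointMass_mul, sum_jointMass_mul,
    ← sum_ite_eq_true_add_sum_ite_eq_false γ.support b fun ξ => γ ξ * ∑ θ, ξ θ * w θ (b ξ)]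
  congr 1 <;> exact sum_congr rfl fun ξ _ => by split_ifs with h <;> simp [h]

variable {𝒦 : Type*} (u : 𝒦 → Θ → Bool → ℝ) (k : 𝒦)

theorem sum_jointMass_bestA1_mul_sub_nonneg (hγ : ∀ ξ, 0 ≤ γ ξ) (a : Bool) :
    0 ≤ ∑ θ, jointMass γ (bestA1 u k) a θ * (u k θ a - u k θ (!a)) := by
  rw [sum_jointMass_mul]
  refine sum_nonneg fun ξ _ => ?_
  split_ifs with h
  · have hbest := sum_mul_le_sum_mul_bestA1 u k ξ (!a)
    rw [h] at hbest
    refine mul_nonneg (hγ ξ) ?_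
    simpa only [mul_sub, sum_sub_distrib, sub_nonneg] using hbest
  · exact le_rfl

/-- Reacting to the recommendation `b ξ` by a fixed action is no better than best-responding to
the posterior `ξ` itself. -/
theorem max_add_max_sum_jointMass_le (hγ : ∀ ξ, 0 ≤ γ ξ) :
    max (∑ θ, jointMass γ b true θ * u k θ true) (∑ θ, jointMass γ b true θ * u k θ false) +
        max (∑ θ, jointMass γ b false θ * u k θ true)
          (∑ θ, jointMass γ b false θ * u k θ false) ≤
      ∑ ξ ∈ γ.support, γ ξ * ∑ θ, ξ θ * u k θ (bestA1 u k ξ) := by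
  have key : ∀ a a', ∑ θ, jointMass γ b a θ * u k θ a' ≤
      ∑ ξ ∈ γ.support, if b ξ = a then γ ξ * ∑ θ, ξ θ * u k θ (bestA1 u k ξ) else 0 :=
    fun a a' => by
      rw [sum_jointMass_mul]
      refine sum_le_sum fun ξ _ => ?_
      split_ifs
      exacts [mul_le_mul_of_nonneg_left (sum_mul_le_sum_mul_bestA1 u k ξ a') (hγ ξ), le_rfl]
  rw [← sum_ite_eq_true_add_sum_ite_eq_false γ.support b]
  exact add_le_add (max_le (key _ _) (key _ _)) (max_le (key _ _) (key _ _))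

end jointMass

theorem exists_direct_marginal_menu_dominating_general
    {Θ 𝒦 : Type*} [Fintype Θ]
    (μ : Θ → ℝ) (hμpos : ∀ θ, 0 < μ θ)
    (u : 𝒦 → Θ → Bool → ℝ)
    -- the given menu: finitely supported probability distributions over posteriors
    (γ : 𝒦 → ((Θ → ℝ) →₀ ℝ))
    (hγnn : ∀ k ξ, 0 ≤ γ k ξ)
    (hγpost : ∀ k, ∀ ξ ∈ (γ k).support, (∀ θ, 0 ≤ ξ θ) ∧ ∑ θ, ξ θ = 1)
    (hγbayes : ∀ k θ, ∑ ξ ∈ (γ k).support, γ k ξ * ξ θ = μ θ)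
    -- incentive compatibility of the given menu
    (hγIC : ∀ k k', k ≠ k' →
      ∑ ξ ∈ (γ k').support, γ k' ξ * ∑ θ, ξ θ * u k θ (bestA1 u k ξ) ≤
        ∑ ξ ∈ (γ k).support, γ k ξ * ∑ θ, ξ θ * u k θ (bestA1 u k ξ)) :
    ∃ x : 𝒦 → Θ → ℝ,
      (∀ k θ, x k θ ∈ Set.Icc (0 : ℝ) 1) ∧
      -- persuasiveness
      (∀ k, 0 ≤ ∑ θ, μ θ * x k θ * (u k θ true - u k θ false)) ∧
      (∀ k, 0 ≤ ∑ θ, μ θ * (1 - x k θ) * (u k θ false - u k θ true)) ∧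
      -- incentive compatibility of the direct marginal menu
      (∀ k k', k ≠ k' →
        max (∑ θ, μ θ * x k' θ * u k θ true) (∑ θ, μ θ * x k' θ * u k θ false) +
          max (∑ θ, μ θ * (1 - x k' θ) * u k θ true)
              (∑ θ, μ θ * (1 - x k' θ) * u k θ false) ≤
        ∑ θ, μ θ * (x k θ * u k θ true + (1 - x k θ) * u k θ false)) ∧
      -- in every state, the probability of playing `a1` weakly increases
      (∀ k θ,
        ∑ ξ ∈ (γ k).support, (if bestA1 u k ξ = true then γ k ξ * ξ θ else 0) ≤
          μ θ * x k θ) := by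
  have hmass := fun k => jointMass_nonneg (bestA1 u k) (hγnn k) fun ξ hξ => (hγpost k ξ hξ).1
  choose x hx01 hxS hxT using fun k θ =>
    exists_mem_Icc_mul_eq (hμpos θ) (hmass k true θ) (hmass k false θ)
      ((jointMass_true_add_false (γ k) (bestA1 u k) θ).trans (hγbayes k θ))
  refine ⟨x, hx01, fun k => ?_, fun k => ?_, fun k k' hkk' => ?_, fun k θ => (hxS k θ).ge⟩
  · simpa only [hxS, Bool.not_true] using sum_jointMass_bestA1_mul_sub_nonneg (γ k) u k (hγnn k) true
  · simpa only [hxT, Bool.not_false] using sum_jointMass_bestA1_mul_sub_nonneg (γ k) u k (hγnn k) false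
  · simp only [hxS, hxT, mul_add, ← mul_assoc]
    calc _ ≤ _ := max_add_max_sum_jointMass_le (γ k') (bestA1 u k') u k (hγnn k')
      _ ≤ _ := hγIC k k' hkk'
      _ = _ := (sum_jointMass_mul_add (γ k) (bestA1 u k) (u k)).symm

/-- Single receiver, two actions: every incentive compatible menu of
distributions over posteriors can be turned into a persuasive, incentive compatible direct
marginal menu in which, in every state, the joint probability that the receiver plays `a1`
weakly increases. -/
theorem exists_direct_marginal_menu_dominating
    {Θ 𝒦 : Type*} [Fintype Θ] [Fintype 𝒦] [Nonempty Θ] [Nonempty 𝒦]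
    (μ : Θ → ℝ) (hμpos : ∀ θ, 0 < μ θ) (hμsum : ∑ θ, μ θ = 1)
    (u : 𝒦 → Θ → Bool → ℝ) (hu : ∀ k θ a, u k θ a ∈ Set.Icc (0 : ℝ) 1)
    -- the given menu: finitely supported probability distributions over posteriors
    (γ : 𝒦 → ((Θ → ℝ) →₀ ℝ))
    (hγnn : ∀ k ξ, 0 ≤ γ k ξ)
    (hγpost : ∀ k, ∀ ξ ∈ (γ k).support, (∀ θ, 0 ≤ ξ θ) ∧ ∑ θ, ξ θ = 1)
    (hγone : ∀ k, ∑ ξ ∈ (γ k).support, γ k ξ = 1)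
    (hγbayes : ∀ k θ, ∑ ξ ∈ (γ k).support, γ k ξ * ξ θ = μ θ)
    -- incentive compatibility of the given menu
    (hγIC : ∀ k k', k ≠ k' →
      ∑ ξ ∈ (γ k').support, γ k' ξ * ∑ θ, ξ θ * u k θ (bestA1 u k ξ) ≤
        ∑ ξ ∈ (γ k).support, γ k ξ * ∑ θ, ξ θ * u k θ (bestA1 u k ξ)) :
    ∃ x : 𝒦 → Θ → ℝ,
      (∀ k θ, x k θ ∈ Set.Icc (0 : ℝ) 1) ∧
      -- persuasiveness
      (∀ k, 0 ≤ ∑ θ, μ θ * x k θ * (u k θ true - u k θ false)) ∧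
      (∀ k, 0 ≤ ∑ θ, μ θ * (1 - x k θ) * (u k θ false - u k θ true)) ∧
      -- incentive compatibility of the direct marginal menu
      (∀ k k', k ≠ k' →
        max (∑ θ, μ θ * x k' θ * u k θ true) (∑ θ, μ θ * x k' θ * u k θ false) +
          max (∑ θ, μ θ * (1 - x k' θ) * u k θ true)
              (∑ θ, μ θ * (1 - x k' θ) * u k θ false) ≤
        ∑ θ, μ θ * (x k θ * u k θ true + (1 - x k θ) * u k θ false)) ∧
      -- in every state, the probability of playing `a1` weakly increases
      (∀ k θ,
        ∑ ξ ∈ (γ k).support, (if bestA1 u k ξ = true then γ k ξ * ξ θ else 0) ≤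
          μ θ * x k θ) :=
  exists_direct_marginal_menu_dominating_general μ hμpos u γ hγnn hγpost hγbayes hγIC
end
end

section
/- Let ℛ be a finite set, f : 2^ℛ → [0,1], and let φ be a probability distribution on the subsets of ℛ whose support has size at most β. Then for every positive integer q there exist subsets R_1, …, R_q ⊆ ℛ (repetitions allowed) such that: (i) for every r ∈ ℛ, |{j ∈ {1,…,q} : r ∈ R_j}| / q ≤ Σ_{R ∋ r} φ(R); and (ii) (1/q) Σ_{j=1}^{q} f(R_j) ≥ Σ_{R⊆ℛ} φ(R) f(R) − β/q. -/
/-!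
Round each mass `q φ(T)` down to an integer `m T` and give the missing `q - ∑ m` copies to the
empty set, which contains no `r`. The marginals can then only decrease, while each supported `T`
loses less than one copy, i.e. at most `f T ≤ 1` of utility, hence at most `β` in total before
dividing by `q`.
-/

open Finset

noncomputable section

section Quantization

variable {α : Type*} [Fintype α]

theorem exists_fin_sum_comp_eq_sum_nsmul {M : Type*} [AddCommMonoid M] (m : α → ℕ) (q : ℕ)
    (hm : ∑ a, m a = q) :
    ∃ R : Fin q → α, ∀ g : α → M, ∑ j, g (R j) = ∑ a, m a • g a := by
  obtain ⟨e⟩ : Nonempty (Fin q ≃ Σ a, Fin (m a)) :=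
    Fintype.card_eq.mp (by simp [Fintype.card_sigma, hm])
  refine ⟨fun j => (e j).1, fun g => ?_⟩
  rw [e.sum_comp (fun p => g p.1), Fintype.sum_sigma]
  simp

theorem exists_floor_rounding [DecidableEq α] (a₀ : α) (φ : α → ℝ) (hφ : ∀ a, 0 ≤ φ a)
    (hφsum : ∑ a, φ a ≤ 1) (q : ℕ) :
    ∃ m : α → ℕ, ∑ a, m a = q ∧ (∀ a ≠ a₀, (m a : ℝ) ≤ q * φ a) ∧
      ∀ a, (q : ℝ) * φ a < m a + 1 := by
  have hfloor (a : α) : (⌊(q : ℝ) * φ a⌋₊ : ℝ) ≤ q * φ a :=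
    Nat.floor_le (mul_nonneg q.cast_nonneg (hφ a))
  have hsum : ∑ a, ⌊(q : ℝ) * φ a⌋₊ ≤ q := by
    have : ∑ a, (⌊(q : ℝ) * φ a⌋₊ : ℝ) ≤ q :=
      calc ∑ a, (⌊(q : ℝ) * φ a⌋₊ : ℝ) ≤ ∑ a, (q : ℝ) * φ a := sum_le_sum fun a _ => hfloor a
        _ = q * ∑ a, φ a := (mul_sum ..).symm
        _ ≤ q := mul_le_of_le_one_right q.cast_nonneg hφsum
    exact_mod_cast this
  refine ⟨fun a => ⌊(q : ℝ) * φ a⌋₊ + Pi.single (M := fun _ => ℕ) a₀ (q - ∑ a, ⌊(q : ℝ) * φ a⌋₊) a, ?_, ?_, ?_⟩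
  · simp [sum_add_distrib, hsum]
  · intro a ha
    simpa [Pi.single_apply, ha] using hfloor a
  · intro a
    calc (q : ℝ) * φ a < ⌊(q : ℝ) * φ a⌋₊ + 1 := Nat.lt_floor_add_one _
      _ ≤ _ := by gcongr; simp

theorem mul_sum_mul_sub_card_support_le (q : ℕ) (φ f : α → ℝ) (m : α → ℕ)
    (hf : ∀ a, f a ∈ Set.Icc (0 : ℝ) 1) (hm : ∀ a, (q : ℝ) * φ a < m a + 1) :
    q * ∑ a, φ a * f a - #{a | φ a ≠ 0} ≤ ∑ a, m a * f a := by
  rw [natCast_card_filter, mul_sum, ← sum_sub_distrib]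
  refine sum_le_sum fun a _ => ?_
  obtain ⟨hf0, hf1⟩ := hf a
  by_cases hφa : φ a = 0
  · simp only [hφa, mul_zero, zero_mul, ne_eq, not_true_eq_false, if_false, sub_zero]
    positivity
  · simp only [ne_eq, hφa, not_false_eq_true, if_true]
    nlinarith [hm a]

end Quantization

/-- Quantization: if `φ` is a distribution over subsets of `ℛ` with support of
size at most `β` and `f` takes values in `[0,1]`, then for every positive integer `q` there are
subsets `R_1, …, R_q` (repetitions allowed) whose empirical frequencies are dominated by the
marginals of `φ` and whose average `f`-value is at least the expectation of `f` under `φ`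
minus `β / q`. -/
theorem exists_q_uniform_quantization
    {ℛ : Type*} [Fintype ℛ] [DecidableEq ℛ]
    (f : Finset ℛ → ℝ) (hf : ∀ R, f R ∈ Set.Icc (0 : ℝ) 1)
    (φ : Finset ℛ → ℝ) (hφnn : ∀ R, 0 ≤ φ R) (hφsum : ∑ R : Finset ℛ, φ R = 1)
    (β : ℕ) (hβ : (Finset.univ.filter (fun R : Finset ℛ => φ R ≠ 0)).card ≤ β)
    (q : ℕ) (hq : 0 < q) :
    ∃ R : Fin q → Finset ℛ,
      (∀ r : ℛ, ((Finset.univ.filter (fun j : Fin q => r ∈ R j)).card : ℝ) / q ≤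
        ∑ T ∈ Finset.univ.filter (fun T : Finset ℛ => r ∈ T), φ T) ∧
      ((∑ T : Finset ℛ, φ T * f T) - (β : ℝ) / q ≤ (1 / q : ℝ) * ∑ j : Fin q, f (R j)) := by
  have hq' : (0 : ℝ) < q := by exact_mod_cast hq
  obtain ⟨m, hmsum, hm_le, hm_gt⟩ := exists_floor_rounding ∅ φ hφnn hφsum.le q
  obtain ⟨R, hR⟩ := exists_fin_sum_comp_eq_sum_nsmul (M := ℝ) m q hmsum
  refine ⟨R, fun r => ?_, ?_⟩
  · rw [div_le_iff₀ hq', natCast_card_filter, hR fun T => if r ∈ T then 1 else 0, sum_mul,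
      sum_filter]
    refine sum_le_sum fun T _ => ?_
    split_ifs with hrT
    · simpa [mul_comm] using hm_le T (ne_empty_of_mem hrT)
    · simp
  · have hloss := mul_sum_mul_sub_card_support_le q φ f m hf hm_gt
    have hβ' : (#{R | φ R ≠ 0} : ℝ) ≤ β := by exact_mod_cast hβ
    rw [hR]
    simp only [nsmul_eq_mul]
    rw [one_div, ← div_eq_inv_mul, le_div_iff₀ hq', sub_mul, div_mul_cancel₀ _ hq'.ne']
    linarith
end
end

section
/- Let ℛ be a finite set, f : 2^ℛ → ℝ with multilinear extension F, let q be a positive integer, and let x^1, …, x^q ∈ [0,1]^ℛ. Then there exist y^1, …, y^q ∈ [0,1]^ℛ such that: (i) Σ_{j=1}^{q} y^j_r = Σ_{j=1}^{q} x^j_r for every r ∈ ℛ; (ii) for each r ∈ ℛ there is at most one index j with y^j_r ∉ {0,1}; and (iii) Σ_{j=1}^{q} F(y^j) ≥ Σ_{j=1}^{q} F(x^j). -/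
/-!
The multilinear extension `F` is affine in each coordinate. Hence, if two vectors `x^j, x^k` both
have a fractional `r`-th coordinate, moving mass `t` from `x^k_r` to `x^j_r` keeps the column sums
and changes `∑ F(x^m)` by `t` times the difference of the two partial derivatives `∂_r F`. Moving in
the non-decreasing direction until one of the two entries hits `0` or `1` removes a fractional
entry without creating another, so finitely many such moves finish the rounding.
-/

open Finset

noncomputable section

/-- The multilinear extension of a set function `f : 2^ℛ → ℝ`. -/
noncomputable def mlext {ℛ : Type*} [Fintype ℛ] [DecidableEq ℛ]
    (f : Finset ℛ → ℝ) (x : ℛ → ℝ) : ℝ :=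
  ∑ R : Finset ℛ, f R * ((∏ r ∈ R, x r) * ∏ r ∈ Rᶜ, (1 - x r))

section Rounding

open Function Set

variable {ℛ ι : Type*}

section Mlext

variable [Fintype ℛ] [DecidableEq ℛ]

theorem mlext_update_affine (f : Finset ℛ → ℝ) (x : ℛ → ℝ) (r : ℛ) (v : ℝ) :
    mlext f (update x r v)
      = (1 - v) * mlext f (update x r 0) + v * mlext f (update x r 1) := by
  simp only [mlext, mul_sum, ← sum_add_distrib]
  refine sum_congr rfl fun R _ => ?_
  have hcompl (w : ℝ) : ∏ i ∈ Rᶜ, (1 - update x r w i) = ∏ i ∈ Rᶜ, update (1 - x) r (1 - w) i :=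
    prod_congr rfl fun i _ => by rcases eq_or_ne i r with rfl | h <;> simp [*]
  simp only [hcompl]
  by_cases hr : r ∈ R
  · have hr' : r ∉ Rᶜ := by simpa using hr
    simp only [prod_update_of_mem hr, prod_update_of_notMem hr']
    ring
  · have hr' : r ∈ Rᶜ := by simpa using hr
    simp only [prod_update_of_mem hr', prod_update_of_notMem hr]
    ring

theorem mlext_update_eq_add (f : Finset ℛ → ℝ) (x : ℛ → ℝ) (r : ℛ) (v : ℝ) :
    mlext f (update x r v)
      = mlext f x + (v - x r) * (mlext f (update x r 1) - mlext f (update x r 0)) := by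
  have hx := mlext_update_affine f x r (x r)
  rw [update_eq_self] at hx
  rw [mlext_update_affine, hx]
  ring

end Mlext

section ShiftCoord

variable [DecidableEq ℛ]

def shiftCoord (x : ι → ℛ → ℝ) (r : ℛ) (e : ι → ℝ) : ι → ℛ → ℝ :=
  fun m => update (x m) r (x m r + e m)

theorem sum_shiftCoord_apply [Fintype ι] (x : ι → ℛ → ℝ) (r : ℛ) {e : ι → ℝ}
    (he : ∑ m, e m = 0) (r' : ℛ) : ∑ m, shiftCoord x r e m r' = ∑ m, x m r' := by
  rcases eq_or_ne r' r with rfl | hr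
  · simp [shiftCoord, sum_add_distrib, he]
  · simp [shiftCoord, hr]

theorem sum_mlext_shiftCoord [Fintype ι] [Fintype ℛ] (f : Finset ℛ → ℝ) (x : ι → ℛ → ℝ)
    (r : ℛ) (e : ι → ℝ) :
    ∑ m, mlext f (shiftCoord x r e m) = ∑ m, mlext f (x m)
      + ∑ m, e m * (mlext f (update (x m) r 1) - mlext f (update (x m) r 0)) := by
  rw [← sum_add_distrib]
  exact sum_congr rfl fun m _ => by rw [shiftCoord, mlext_update_eq_add]; ring

end ShiftCoord

theorem exists_shift_to_boundary {c d : ℝ} (β : ℝ) (hc : c ∈ Icc (0 : ℝ) 1)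
    (hd : d ∈ Icc (0 : ℝ) 1) :
    ∃ t : ℝ, c + t ∈ Icc (0 : ℝ) 1 ∧ d - t ∈ Icc (0 : ℝ) 1 ∧ 0 ≤ t * β ∧
      ((c + t = 0 ∨ c + t = 1) ∨ (d - t = 0 ∨ d - t = 1)) := by
  obtain ⟨hc0, hc1⟩ := hc
  obtain ⟨hd0, hd1⟩ := hd
  rcases le_total 0 β with hβ | hβ
  · rcases le_total (1 - c) d with h | h
    · exact ⟨1 - c, by simp, ⟨by linarith, by linarith⟩, by nlinarith, by simp⟩
    · exact ⟨d, ⟨by linarith, by linarith⟩, by simp, by nlinarith, by simp⟩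
  · rcases le_total c (1 - d) with h | h
    · exact ⟨-c, by simp, ⟨by linarith, by linarith⟩, by nlinarith, by simp⟩
    · exact ⟨d - 1, ⟨by linarith, by linarith⟩, by simp, by nlinarith, by simp⟩

section Fractional

variable [Fintype ι] [Fintype ℛ]

def fractionalEntries (x : ι → ℛ → ℝ) : Finset (ι × ℛ) :=
  univ.filter fun p => x p.1 p.2 ≠ 0 ∧ x p.1 p.2 ≠ 1

theorem fractionalEntries_ssubset {x y : ι → ℛ → ℝ} {p : ι × ℛ}
    (hchanged : ∀ q : ι × ℛ, y q.1 q.2 ≠ x q.1 q.2 → q ∈ fractionalEntries x)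
    (hp : p ∈ fractionalEntries x) (hp' : p ∉ fractionalEntries y) :
    fractionalEntries y ⊂ fractionalEntries x := by
  refine ssubset_of_subset_of_ne (fun q hq => ?_) (fun h => hp' (h ▸ hp))
  by_cases hyx : y q.1 q.2 = x q.1 q.2
  · simpa [fractionalEntries, hyx] using hq
  · exact hchanged q hyx

variable [DecidableEq ι] [DecidableEq ℛ]

theorem exists_shift_fractionalEntries_ssubset (f : Finset ℛ → ℝ) {x : ι → ℛ → ℝ}
    (hx : ∀ m r, x m r ∈ Icc (0 : ℝ) 1) {r : ℛ} {j k : ι} (hjk : j ≠ k)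
    (hj : (j, r) ∈ fractionalEntries x) (hk : (k, r) ∈ fractionalEntries x) :
    ∃ y : ι → ℛ → ℝ, (∀ m r, y m r ∈ Icc (0 : ℝ) 1) ∧ (∀ r, ∑ m, y m r = ∑ m, x m r) ∧
      fractionalEntries y ⊂ fractionalEntries x ∧
      ∑ m, mlext f (x m) ≤ ∑ m, mlext f (y m) := by
  set slope : ι → ℝ := fun m => mlext f (update (x m) r 1) - mlext f (update (x m) r 0)
  obtain ⟨t, hjt, hkt, hgain, hbdry⟩ :=
    exists_shift_to_boundary (slope j - slope k) (hx j r) (hx k r)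
  set e : ι → ℝ := Pi.single j t - Pi.single k t
  have hej : e j = t := by simp [e, hjk]
  have hek : e k = -t := by simp [e, hjk.symm]
  have heo : ∀ m, m ≠ j → m ≠ k → e m = 0 := fun m h1 h2 => by simp [e, h1, h2]
  set y := shiftCoord x r e
  have hyj : y j r = x j r + t := by simp [y, shiftCoord, hej]
  have hyk : y k r = x k r - t := by simp [y, shiftCoord, hek, sub_eq_add_neg]
  have hyo : ∀ m r', y m r' ≠ x m r' → r' = r ∧ (m = j ∨ m = k) := by
    intro m r' hne
    obtain rfl : r' = r := by
      by_contra hr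
      exact hne (by simp [y, shiftCoord, hr])
    refine ⟨rfl, ?_⟩
    by_contra! h
    exact hne (by simp [y, shiftCoord, heo m h.1 h.2])
  refine ⟨y, fun m r' => ?_, sum_shiftCoord_apply x r (by simp [e]), ?_, ?_⟩
  · by_cases hyx : y m r' = x m r'
    · exact hyx ▸ hx m r'
    · obtain ⟨rfl, rfl | rfl⟩ := hyo m r' hyx
      · exact hyj ▸ hjt
      · exact hyk ▸ hkt
  · have hchanged : ∀ q : ι × ℛ, y q.1 q.2 ≠ x q.1 q.2 → q ∈ fractionalEntries x := by
      rintro ⟨m, r'⟩ hne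
      obtain ⟨rfl, rfl | rfl⟩ := hyo m r' hne
      exacts [hj, hk]
    rcases hbdry with hbdry | hbdry
    · exact fractionalEntries_ssubset hchanged hj (by simp [fractionalEntries, hyj]; tauto)
    · exact fractionalEntries_ssubset hchanged hk (by simp [fractionalEntries, hyk]; tauto)
  · have hsum : ∑ m, e m * slope m = t * (slope j - slope k) := by
      simp [e, sub_mul, ← Pi.single_mul_left_apply, mul_sub]
    rw [sum_mlext_shiftCoord, hsum]
    linarith

theorem exists_rebalanced (f : Finset ℛ → ℝ) (x : ι → ℛ → ℝ)
    (hx : ∀ m r, x m r ∈ Icc (0 : ℝ) 1) :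
    ∃ y : ι → ℛ → ℝ, (∀ m r, y m r ∈ Icc (0 : ℝ) 1) ∧ (∀ r, ∑ m, y m r = ∑ m, x m r) ∧
      (∀ r, (univ.filter fun m => y m r ≠ 0 ∧ y m r ≠ 1).card ≤ 1) ∧
      ∑ m, mlext f (x m) ≤ ∑ m, mlext f (y m) := by
  by_cases hdone : ∀ r, (univ.filter fun m => x m r ≠ 0 ∧ x m r ≠ 1).card ≤ 1
  · exact ⟨x, hx, fun _ => rfl, hdone, le_rfl⟩
  push Not at hdone
  obtain ⟨r, hr⟩ := hdone
  obtain ⟨j, hj, k, hk, hjk⟩ := one_lt_card.mp hr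
  obtain ⟨y, hy, hysum, hyfrac, hyval⟩ := exists_shift_fractionalEntries_ssubset f hx hjk
    (by simpa [fractionalEntries] using hj) (by simpa [fractionalEntries] using hk)
  obtain ⟨z, hz, hzsum, hzfrac, hzval⟩ := exists_rebalanced f y hy
  exact ⟨z, hz, fun r => (hzsum r).trans (hysum r), hzfrac, hyval.trans hzval⟩
termination_by (fractionalEntries x).card
decreasing_by exact card_lt_card hyfrac

end Fractional

end Rounding

theorem exists_rounded_vectors_general
    {ℛ : Type*} [Fintype ℛ] [DecidableEq ℛ]
    (f : Finset ℛ → ℝ) (q : ℕ)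
    (x : Fin q → ℛ → ℝ) (hx : ∀ j r, x j r ∈ Set.Icc (0 : ℝ) 1) :
    ∃ y : Fin q → ℛ → ℝ,
      (∀ j r, y j r ∈ Set.Icc (0 : ℝ) 1) ∧
      (∀ r : ℛ, ∑ j : Fin q, y j r = ∑ j : Fin q, x j r) ∧
      (∀ r : ℛ,
        (Finset.univ.filter (fun j : Fin q => y j r ≠ 0 ∧ y j r ≠ 1)).card ≤ 1) ∧
      (∑ j : Fin q, mlext f (x j) ≤ ∑ j : Fin q, mlext f (y j)) :=
  exists_rebalanced f x hx

/-- Column-wise rebalancing: given `x^1, …, x^q ∈ [0,1]^ℛ`, there are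
`y^1, …, y^q ∈ [0,1]^ℛ` preserving per-coordinate sums, with at most one non-binary entry per
coordinate, and with total multilinear value at least as large. -/
theorem exists_rounded_vectors
    {ℛ : Type*} [Fintype ℛ] [DecidableEq ℛ]
    (f : Finset ℛ → ℝ) (q : ℕ) (hq : 0 < q)
    (x : Fin q → ℛ → ℝ) (hx : ∀ j r, x j r ∈ Set.Icc (0 : ℝ) 1) :
    ∃ y : Fin q → ℛ → ℝ,
      (∀ j r, y j r ∈ Set.Icc (0 : ℝ) 1) ∧
      (∀ r : ℛ, ∑ j : Fin q, y j r = ∑ j : Fin q, x j r) ∧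
      (∀ r : ℛ,
        (Finset.univ.filter (fun j : Fin q => y j r ≠ 0 ∧ y j r ≠ 1)).card ≤ 1) ∧
      (∑ j : Fin q, mlext f (x j) ≤ ∑ j : Fin q, mlext f (y j)) :=
  exists_rounded_vectors_general f q x hx
end
end

section
/- Let ℛ be a finite set with |ℛ| = n, f : 2^ℛ → [0,1] with multilinear extension F, and let y^1, …, y^q ∈ [0,1]^ℛ be such that for each r ∈ ℛ at most one index j has y^j_r ∉ {0,1}. Let Q := {j : y^j ∈ {0,1}^ℛ} and, for j ∈ Q, R_j := {r : y^j_r = 1}. Then |Q| ≥ q − n, and the nonnegative weights φ(R) := |{j ∈ Q : R_j = R}| / q (which sum to at most 1 over R ⊆ ℛ) satisfy: (i) Σ_{R ∋ r} φ(R) ≤ (1/q) Σ_{j=1}^{q} y^j_r for every r ∈ ℛ; and (ii) Σ_{R⊆ℛ} φ(R) f(R) ≥ (1/q) Σ_{j=1}^{q} F(y^j) − n/q. -/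
/-!
Each coordinate `r` makes at most one vector `y^j` non-binary, so at most `n` vectors are
non-binary; each contributes at most `1` to `Σ_j F(y^j)`, since `F(x)` is an average of values of
`f` under the product distribution of `x`. A binary vector `y^j` is the indicator of `R_j`, and
there `F(y^j) = f(R_j)`, which is exactly the contribution of `j` to `q · Σ_R φ(R) f(R)`.
-/

open Finset

noncomputable section

/-- The set `Q` of indices `j` whose vector `y j` is binary. -/
noncomputable def binIdx {ℛ : Type*} [Fintype ℛ] {q : ℕ}
    (y : Fin q → ℛ → ℝ) : Finset (Fin q) :=
  Finset.univ.filter (fun j : Fin q => ∀ r : ℛ, y j r = 0 ∨ y j r = 1)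

/-- The subset `R_j = {r : y j r = 1}` associated with index `j`. -/
noncomputable def oneSet {ℛ : Type*} [Fintype ℛ] {q : ℕ}
    (y : Fin q → ℛ → ℝ) (j : Fin q) : Finset ℛ :=
  Finset.univ.filter (fun r : ℛ => y j r = 1)

/-- The weights `φ(R) = |{j ∈ Q : R_j = R}| / q`. -/
noncomputable def extractWeight {ℛ : Type*} [Fintype ℛ] [DecidableEq ℛ] {q : ℕ}
    (y : Fin q → ℛ → ℝ) (R : Finset ℛ) : ℝ :=
  (((binIdx y).filter (fun j : Fin q => oneSet y j = R)).card : ℝ) / q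

section MultilinearExtension

variable {ℛ : Type*} [Fintype ℛ] [DecidableEq ℛ]

theorem sum_prod_mul_prod_compl_one_sub (x : ℛ → ℝ) :
    ∑ R : Finset ℛ, (∏ r ∈ R, x r) * ∏ r ∈ Rᶜ, (1 - x r) = 1 := by
  simpa [compl_eq_univ_sdiff] using (prod_add x (fun r => 1 - x r) univ).symm

theorem prod_mul_prod_compl_one_sub_nonneg {x : ℛ → ℝ}
    (hx : ∀ r, x r ∈ Set.Icc (0 : ℝ) 1) (R : Finset ℛ) :
    0 ≤ (∏ r ∈ R, x r) * ∏ r ∈ Rᶜ, (1 - x r) :=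
  mul_nonneg (prod_nonneg fun r _ => (hx r).1) (prod_nonneg fun r _ => sub_nonneg.2 (hx r).2)

theorem mlext_le_one {f : Finset ℛ → ℝ} (hf : ∀ R, f R ≤ 1) {x : ℛ → ℝ}
    (hx : ∀ r, x r ∈ Set.Icc (0 : ℝ) 1) : mlext f x ≤ 1 :=
  calc mlext f x ≤ ∑ R : Finset ℛ, (∏ r ∈ R, x r) * ∏ r ∈ Rᶜ, (1 - x r) :=
        sum_le_sum fun R _ =>
          mul_le_of_le_one_left (prod_mul_prod_compl_one_sub_nonneg hx R) (hf R)
    _ = 1 := sum_prod_mul_prod_compl_one_sub x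

theorem prod_mul_prod_compl_one_sub_of_binary {x : ℛ → ℝ} (hx : ∀ r, x r = 0 ∨ x r = 1)
    (R : Finset ℛ) :
    (∏ r ∈ R, x r) * ∏ r ∈ Rᶜ, (1 - x r) =
      if R = ({r | x r = 1} : Finset ℛ) then 1 else 0 := by
  split_ifs with hR
  · subst hR
    rw [prod_eq_one fun r hr => (mem_filter.1 hr).2, prod_eq_one fun r hr => ?_, one_mul]
    have : x r ≠ 1 := by simpa using hr
    simp [(hx r).resolve_right this]
  · obtain ⟨r, hr⟩ : ∃ r, ¬(r ∈ R ↔ x r = 1) := by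
      by_contra! h
      exact hR (ext fun r => by simp [h r])
    by_cases hrR : r ∈ R
    · have : x r = 0 := (hx r).resolve_right (by tauto)
      rw [prod_eq_zero hrR this, zero_mul]
    · have : x r = 1 := by tauto
      rw [prod_eq_zero (mem_compl.2 hrR) (by simp [this]), mul_zero]

theorem mlext_of_binary (f : Finset ℛ → ℝ) {x : ℛ → ℝ}
    (hx : ∀ r, x r = 0 ∨ x r = 1) :
    mlext f x = f ({r | x r = 1} : Finset ℛ) := by
  simp [mlext, prod_mul_prod_compl_one_sub_of_binary hx]

end MultilinearExtension

section Extraction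

variable {ℛ : Type*} [Fintype ℛ] {q : ℕ} (y : Fin q → ℛ → ℝ)

theorem card_compl_binIdx_le
    (hbin : ∀ r : ℛ, (univ.filter (fun j : Fin q => y j r ≠ 0 ∧ y j r ≠ 1)).card ≤ 1) :
    (binIdx y)ᶜ.card ≤ Fintype.card ℛ := by
  refine card_le_card_of_forall_subsingleton (fun j r => y j r ≠ 0 ∧ y j r ≠ 1)
    (fun j hj => ?_) (fun r _ j₁ hj₁ j₂ hj₂ => ?_)
  · simpa [binIdx, not_or] using hj
  · exact card_le_one.1 (hbin r) j₁ (by simpa using hj₁.2) j₂ (by simpa using hj₂.2)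

variable [DecidableEq ℛ]

theorem sum_extractWeight_mul (g : Finset ℛ → ℝ) :
    ∑ R : Finset ℛ, extractWeight y R * g R = (∑ j ∈ binIdx y, g (oneSet y j)) / q := by
  rw [← sum_fiberwise (binIdx y) (oneSet y), sum_div]
  refine sum_congr rfl fun R _ => ?_
  rw [extractWeight, div_mul_eq_mul_div, sum_congr rfl fun j hj => by rw [(mem_filter.1 hj).2],
    sum_const, nsmul_eq_mul]

theorem sum_extractWeight_filter_mem_le (r : ℛ) (hy : ∀ j, 0 ≤ y j r) :
    ∑ R ∈ univ.filter (fun R : Finset ℛ => r ∈ R), extractWeight y R ≤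
      (1 / q : ℝ) * ∑ j : Fin q, y j r := by
  rw [sum_filter, sum_congr rfl fun R _ => (mul_boole _ _).symm, sum_extractWeight_mul,
    one_div_mul_eq_div]
  refine div_le_div_of_nonneg_right ?_ q.cast_nonneg
  calc ∑ j ∈ binIdx y, (if r ∈ oneSet y j then 1 else 0)
      ≤ ∑ j ∈ binIdx y, y j r := sum_le_sum fun j _ => by
        split_ifs with h
        · exact (mem_filter.1 h).2.ge
        · exact hy j
    _ ≤ ∑ j : Fin q, y j r := sum_le_sum_of_subset_of_nonneg (subset_univ _) fun j _ _ => hy j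

theorem sum_mlext_le {f : Finset ℛ → ℝ} (hf : ∀ R, f R ≤ 1)
    (hy01 : ∀ j r, y j r ∈ Set.Icc (0 : ℝ) 1)
    (hbin : ∀ r : ℛ, (univ.filter (fun j : Fin q => y j r ≠ 0 ∧ y j r ≠ 1)).card ≤ 1) :
    ∑ j : Fin q, mlext f (y j) ≤ ∑ j ∈ binIdx y, f (oneSet y j) + Fintype.card ℛ := by
  rw [← sum_add_sum_compl (binIdx y)]
  gcongr with j hj
  · exact (mlext_of_binary f (mem_filter.1 hj).2).le
  · calc ∑ j ∈ (binIdx y)ᶜ, mlext f (y j) ≤ ∑ j ∈ (binIdx y)ᶜ, (1 : ℝ) :=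
          sum_le_sum fun j _ => mlext_le_one hf (hy01 j)
      _ ≤ Fintype.card ℛ := by simpa using card_compl_binIdx_le y hbin

end Extraction

theorem extraction_of_near_binary_vectors_general
    {ℛ : Type*} [Fintype ℛ] [DecidableEq ℛ]
    (f : Finset ℛ → ℝ) (hf : ∀ R, f R ∈ Set.Icc (0 : ℝ) 1)
    (n q : ℕ) (hn : n = Fintype.card ℛ)
    (y : Fin q → ℛ → ℝ) (hy01 : ∀ j r, y j r ∈ Set.Icc (0 : ℝ) 1)
    (hbin : ∀ r : ℛ,
      (Finset.univ.filter (fun j : Fin q => y j r ≠ 0 ∧ y j r ≠ 1)).card ≤ 1) :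
    ((q : ℝ) - n ≤ ((binIdx y).card : ℝ)) ∧
    (∀ R : Finset ℛ, 0 ≤ extractWeight y R) ∧
    (∑ R : Finset ℛ, extractWeight y R ≤ 1) ∧
    (∀ r : ℛ,
      ∑ R ∈ Finset.univ.filter (fun R : Finset ℛ => r ∈ R), extractWeight y R ≤
        (1 / q : ℝ) * ∑ j : Fin q, y j r) ∧
    ((1 / q : ℝ) * (∑ j : Fin q, mlext f (y j)) - (n : ℝ) / q ≤
      ∑ R : Finset ℛ, extractWeight y R * f R) := by
  subst hn
  refine ⟨?_, fun R => by unfold extractWeight; positivity, ?_,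
    fun r => sum_extractWeight_filter_mem_le y r fun j => (hy01 j r).1, ?_⟩
  · have hsplit := card_add_card_compl (binIdx y)
    have hcompl := card_compl_binIdx_le y hbin
    rw [Fintype.card_fin] at hsplit
    rw [sub_le_iff_le_add]
    exact_mod_cast (by omega : q ≤ (binIdx y).card + Fintype.card ℛ)
  · have hsum := sum_extractWeight_mul y fun _ => 1
    simp only [mul_one, sum_const, nsmul_eq_mul] at hsum
    rw [hsum]
    exact div_le_one_of_le₀ (by exact_mod_cast card_le_univ _ |>.trans_eq (Fintype.card_fin q))
      q.cast_nonneg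
  · rw [sum_extractWeight_mul]
    calc (1 / q : ℝ) * (∑ j : Fin q, mlext f (y j)) - Fintype.card ℛ / q
        ≤ (1 / q : ℝ) * (∑ j ∈ binIdx y, f (oneSet y j) + Fintype.card ℛ) -
            Fintype.card ℛ / q := by
          gcongr
          exact sum_mlext_le y (fun R => (hf R).2) hy01 hbin
      _ = (∑ j ∈ binIdx y, f (oneSet y j)) / q := by ring

/-- Extraction: from near-binary vectors `y^1, …, y^q ∈ [0,1]^ℛ` (at most one
non-binary entry per coordinate), the weights `φ(R) = |{j ∈ Q : R_j = R}| / q` form a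
subdistribution with `|Q| ≥ q − n`, marginals dominated by the averages `(1/q) Σ_j y^j_r`, and
expected `f`-value at least the average multilinear value minus `n / q`. -/
theorem extraction_of_near_binary_vectors
    {ℛ : Type*} [Fintype ℛ] [DecidableEq ℛ]
    (f : Finset ℛ → ℝ) (hf : ∀ R, f R ∈ Set.Icc (0 : ℝ) 1)
    (n q : ℕ) (hn : n = Fintype.card ℛ) (hq : 0 < q)
    (y : Fin q → ℛ → ℝ) (hy01 : ∀ j r, y j r ∈ Set.Icc (0 : ℝ) 1)
    (hbin : ∀ r : ℛ,
      (Finset.univ.filter (fun j : Fin q => y j r ≠ 0 ∧ y j r ≠ 1)).card ≤ 1) :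
    ((q : ℝ) - n ≤ ((binIdx y).card : ℝ)) ∧
    (∀ R : Finset ℛ, 0 ≤ extractWeight y R) ∧
    (∑ R : Finset ℛ, extractWeight y R ≤ 1) ∧
    (∀ r : ℛ,
      ∑ R ∈ Finset.univ.filter (fun R : Finset ℛ => r ∈ R), extractWeight y R ≤
        (1 / q : ℝ) * ∑ j : Fin q, y j r) ∧
    ((1 / q : ℝ) * (∑ j : Fin q, mlext f (y j)) - (n : ℝ) / q ≤
      ∑ R : Finset ℛ, extractWeight y R * f R) :=
  extraction_of_near_binary_vectors_general f hf n q hn y hy01 hbin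
end
end

section
/- Let ℛ be a finite set and f : 2^ℛ → ℝ submodular. Then for all x, y ∈ [0,1]^ℛ with x_{r'} ≤ y_{r'} for every r' ∈ ℛ, and every r ∈ ℛ: D_r f(x) ≥ D_r f(y). That is, the partial derivatives of the multilinear extension of a submodular function are coordinatewise non-increasing. -/
/-!
The marginal gain `R ↦ f (insert r R) - f R` of a submodular `f` is antitone on sets avoiding
`r`, and `D_r f(x)` is the multilinear extension of this gain over `univ.erase r`. The
multilinear extension of an antitone set function is antitone on the cube: peeling off one
coordinate `a` writes it as `(1 - x a) * A + x a * B` with `B ≤ A`, where `A` and `B` are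
multilinear extensions of antitone functions in the remaining coordinates.
-/

open Finset

noncomputable section

/-- The marginal coefficient `D_r f(x)` (the partial derivative of the multilinear extension of
`f` with respect to `x r`; an expression not involving `x r`). -/
noncomputable def mlderiv {ℛ : Type*} [Fintype ℛ] [DecidableEq ℛ]
    (f : Finset ℛ → ℝ) (r : ℛ) (x : ℛ → ℝ) : ℝ :=
  ∑ R ∈ (Finset.univ.erase r).powerset,
    (f (insert r R) - f R) *
      ((∏ r' ∈ R, x r') * ∏ r' ∈ (Finset.univ.erase r) \ R, (1 - x r'))

section MultilinearExtension

variable {ι : Type*} [DecidableEq ι]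

/-- The expectation of `g` at a random subset of `T` containing each `i` independently with
probability `x i`. -/
def multilinearExt (T : Finset ι) (g : Finset ι → ℝ) (x : ι → ℝ) : ℝ :=
  ∑ R ∈ T.powerset, g R * ((∏ i ∈ R, x i) * ∏ i ∈ T \ R, (1 - x i))

theorem multilinearExt_insert {T : Finset ι} {a : ι} (ha : a ∉ T) (g : Finset ι → ℝ)
    (x : ι → ℝ) :
    multilinearExt (insert a T) g x =
      (1 - x a) * multilinearExt T g x + x a * multilinearExt T (fun R => g (insert a R)) x := by
  simp only [multilinearExt, sum_powerset_insert ha, mul_sum, ← sum_add_distrib]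
  refine sum_congr rfl fun R hR => ?_
  have haR : a ∉ R := fun h => ha (mem_powerset.1 hR h)
  rw [insert_sdiff_of_notMem _ haR, prod_insert (fun h => ha (mem_sdiff.1 h).1),
    insert_sdiff_insert, sdiff_insert_of_notMem ha, prod_insert haR]
  ring

theorem multilinearExt_mono {T : Finset ι} {g g' : Finset ι → ℝ} {x : ι → ℝ}
    (hx : ∀ i ∈ T, x i ∈ Set.Icc (0 : ℝ) 1) (hg : ∀ R ∈ T.powerset, g R ≤ g' R) :
    multilinearExt T g x ≤ multilinearExt T g' x := by
  refine sum_le_sum fun R hR => mul_le_mul_of_nonneg_right (hg R hR) (mul_nonneg ?_ ?_)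
  · exact prod_nonneg fun i hi => (hx i (mem_powerset.1 hR hi)).1
  · exact prod_nonneg fun i hi => sub_nonneg.2 (hx i (mem_sdiff.1 hi).1).2

theorem multilinearExt_le_of_antitoneOn {T : Finset ι} {g : Finset ι → ℝ}
    (hg : AntitoneOn g T.powerset) {x y : ι → ℝ} (hx : ∀ i ∈ T, x i ∈ Set.Icc (0 : ℝ) 1)
    (hy : ∀ i ∈ T, y i ∈ Set.Icc (0 : ℝ) 1) (hxy : ∀ i ∈ T, x i ≤ y i) :
    multilinearExt T g y ≤ multilinearExt T g x := by
  induction T using Finset.induction_on generalizing g with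
  | empty => rfl
  | insert a T ha ih =>
    have hx' : ∀ i ∈ T, x i ∈ Set.Icc (0 : ℝ) 1 := fun i hi => hx i (mem_insert_of_mem hi)
    have hy' : ∀ i ∈ T, y i ∈ Set.Icc (0 : ℝ) 1 := fun i hi => hy i (mem_insert_of_mem hi)
    have hxy' : ∀ i ∈ T, x i ≤ y i := fun i hi => hxy i (mem_insert_of_mem hi)
    have hgT : AntitoneOn g T.powerset :=
      hg.mono (coe_subset.2 (powerset_mono.2 (subset_insert a T)))
    have hga : AntitoneOn (fun R => g (insert a R)) T.powerset := fun R hR R' hR' hRR' =>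
      hg (mem_powerset.2 (insert_subset_insert a (mem_powerset.1 hR)))
        (mem_powerset.2 (insert_subset_insert a (mem_powerset.1 hR')))
        (insert_subset_insert a hRR')
    have hBA : multilinearExt T (fun R => g (insert a R)) y ≤ multilinearExt T g y :=
      multilinearExt_mono hy' fun R hR =>
        hg (mem_powerset.2 ((mem_powerset.1 hR).trans (subset_insert a T)))
          (mem_powerset.2 (insert_subset_insert a (mem_powerset.1 hR))) (subset_insert a R)
    have ha_mem := mem_insert_self a T
    rw [multilinearExt_insert ha, multilinearExt_insert ha]
    calc (1 - y a) * multilinearExt T g y + y a * multilinearExt T (fun R => g (insert a R)) y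
        ≤ (1 - x a) * multilinearExt T g y + x a * multilinearExt T (fun R => g (insert a R)) y :=
          by nlinarith [mul_nonneg (sub_nonneg.2 (hxy a ha_mem)) (sub_nonneg.2 hBA)]
      _ ≤ (1 - x a) * multilinearExt T g x + x a * multilinearExt T (fun R => g (insert a R)) x :=
          add_le_add
            (mul_le_mul_of_nonneg_left (ih hgT hx' hy' hxy') (sub_nonneg.2 (hx a ha_mem).2))
            (mul_le_mul_of_nonneg_left (ih hga hx' hy' hxy') (hx a ha_mem).1)

end MultilinearExtension

theorem antitoneOn_marginal_of_submodular {ι : Type*} [DecidableEq ι] {f : Finset ι → ℝ}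
    (hf : ∀ R R' : Finset ι, f (R ∪ R') + f (R ∩ R') ≤ f R + f R') (r : ι) :
    AntitoneOn (fun R => f (insert r R) - f R) {R | r ∉ R} := by
  intro R _ R' hR' hRR'
  have hunion : insert r R ∪ R' = insert r R' := by
    rw [insert_union, union_eq_right.2 hRR']
  have hinter : insert r R ∩ R' = R := by
    rw [insert_inter_of_notMem hR', inter_eq_left.2 hRR']
  have hsub := hf (insert r R) R'
  rw [hunion, hinter] at hsub
  show f (insert r R') - f R' ≤ f (insert r R) - f R
  linarith

theorem mlderiv_eq_multilinearExt {ℛ : Type*} [Fintype ℛ] [DecidableEq ℛ] (f : Finset ℛ → ℝ)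
    (r : ℛ) (x : ℛ → ℝ) :
    mlderiv f r x = multilinearExt (univ.erase r) (fun R => f (insert r R) - f R) x :=
  rfl

/-- For a submodular set function, the partial derivatives of the multilinear
extension are coordinatewise non-increasing on `[0,1]^ℛ`. -/
theorem mlderiv_antitone_of_submodular
    {ℛ : Type*} [Fintype ℛ] [DecidableEq ℛ]
    (f : Finset ℛ → ℝ)
    (hf : ∀ R R' : Finset ℛ, f (R ∪ R') + f (R ∩ R') ≤ f R + f R')
    (x y : ℛ → ℝ) (hx : ∀ r, x r ∈ Set.Icc (0 : ℝ) 1) (hy : ∀ r, y r ∈ Set.Icc (0 : ℝ) 1)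
    (hxy : ∀ r', x r' ≤ y r') (r : ℛ) :
    mlderiv f r y ≤ mlderiv f r x := by
  have hmarginal : AntitoneOn (fun R => f (insert r R) - f R) (univ.erase r).powerset :=
    (antitoneOn_marginal_of_submodular hf r).mono fun R hR =>
      fun hr => notMem_erase r univ (mem_powerset.1 hR hr)
  rw [mlderiv_eq_multilinearExt, mlderiv_eq_multilinearExt]
  exact multilinearExt_le_of_antitoneOn hmarginal (fun i _ => hx i) (fun i _ => hy i)
    (fun i _ => hxy i)
end
end
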